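/- arXiv:2509.01941 — 5 statements merged into one kernel-verified Lean document; each statement's English description precedes it below -/
import Mathlib

section
/- Let D be a domain in ℝⁿ and E a set that is closed in D. Suppose that for every boundary point x₀ ∈ ∂D (taken in the one-point compactification, i.e. including ∞ when D is unbounded) there exist m(x₀) ∈ ℕ and r₀(x₀) > 0 such that (B(x₀, r) ∩ D) \ E consists of at most m(x₀) connected components for every 0 < r < r₀(x₀), and likewise every point of D ∩ closure(E) has arbitrarily small neighborhoods V with (V ∩ D) \ E having finitely many components. Then D \ E has only finitely many connected components. -/
open Set Metric Topology

/-- The set `A` has at most `m` connected components. -/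
def AtMostComponents {X : Type*} [TopologicalSpace X] (A : Set X) (m : ℕ) : Prop :=
  ∃ 𝒞 : Finset (Set X), 𝒞.card ≤ m ∧ ∀ z ∈ A, connectedComponentIn A z ∈ 𝒞

/-- Covering lemma: if a set `S` is covered by a finite family of sets each meeting `S`
in finitely many components, then `S` has finitely many components. -/
lemma comps_finite {X : Type*} [TopologicalSpace X] (S : Set X) (𝒱 : Finset (Set X))
    (hcov : S ⊆ ⋃ V ∈ 𝒱, V)
    (h : ∀ V ∈ 𝒱, ∃ m, AtMostComponents (V ∩ S) m) :
    {C : Set X | ∃ z ∈ S, C = connectedComponentIn S z}.Finite := by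
  classical
  choose! m 𝒞 hcard hmem using h
  set T : Set (Set X) := ⋃ V ∈ 𝒱, (𝒞 V : Set (Set X)) with hT
  have hTfin : T.Finite := by
    apply Set.Finite.biUnion 𝒱.finite_toSet
    intro V hV
    exact (𝒞 V).finite_toSet
  have hsub : {C : Set X | ∃ z ∈ S, C = connectedComponentIn S z} ⊆
      (fun P => ⋃ z ∈ P, connectedComponentIn S z) '' T := by
    rintro C ⟨z, hz, rfl⟩
    obtain ⟨V, hV, hzV⟩ : ∃ V ∈ 𝒱, z ∈ V := by simpa using hcov hz
    have hzVS : z ∈ V ∩ S := ⟨hzV, hz⟩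
    refine ⟨connectedComponentIn (V ∩ S) z, ?_, ?_⟩
    · exact Set.mem_biUnion hV (hmem V hV z hzVS)
    · apply Set.Subset.antisymm
      · intro w hw
        simp only [Set.mem_iUnion] at hw
        obtain ⟨w', hw', hww⟩ := hw
        have h1 : connectedComponentIn (V ∩ S) z ⊆ connectedComponentIn S z :=
          isPreconnected_connectedComponentIn.subset_connectedComponentIn
            (mem_connectedComponentIn hzVS)
            ((connectedComponentIn_subset _ _).trans Set.inter_subset_right)
        have : connectedComponentIn S z = connectedComponentIn S w' :=
          connectedComponentIn_eq (h1 hw')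
        rw [this]; exact hww
      · intro w hw
        exact Set.mem_biUnion (mem_connectedComponentIn hzVS) hw
  exact (hTfin.image _).subset hsub

/-- If `D` is a domain in `ℝⁿ`, `E` is relatively closed in `D`, every boundary point of `D`
(including the point at infinity when `D` is unbounded) has small balls (resp. neighborhoods of
infinity) meeting `D` off `E` in at most `m` components, and every point of `D ∩ closure E`
has arbitrarily small neighborhoods `V` with `(V ∩ D) \ E` having finitely many components,
then `D \ E` has finitely many connected components. -/
theorem stmt0 {n : ℕ} (hn : 2 ≤ n) (D E : Set (EuclideanSpace ℝ (Fin n)))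
    (hD : IsOpen D) (hDconn : IsConnected D) (hED : E ⊆ D) (hEclosed : closure E ∩ D ⊆ E)
    (hbd : ∀ x₀ ∈ frontier D, ∃ (m : ℕ) (r₀ : ℝ), 0 < r₀ ∧
      ∀ r, 0 < r → r < r₀ → AtMostComponents ((ball x₀ r ∩ D) \ E) m)
    (hinf : ¬ Bornology.IsBounded D → ∃ (m : ℕ) (R : ℝ), 0 < R ∧
      ∀ r, R < r → AtMostComponents (({x : EuclideanSpace ℝ (Fin n) | r < ‖x‖} ∩ D) \ E) m)
    (hin : ∀ z₀ ∈ D ∩ closure E, ∀ U ∈ 𝓝 z₀, ∃ V ∈ 𝓝 z₀, V ⊆ U ∧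
      ∃ m : ℕ, AtMostComponents ((V ∩ D) \ E) m) :
    {C : Set (EuclideanSpace ℝ (Fin n)) |
      ∃ z ∈ D \ E, C = connectedComponentIn (D \ E) z}.Finite := by
  classical
  set S := D \ E with hSdef
  have hconv : ∀ V : Set (EuclideanSpace ℝ (Fin n)), (V ∩ D) \ E = V ∩ S := fun V =>
    Set.inter_diff_assoc V D E
  -- every point of closure D has a good neighborhood
  have key : ∀ x ∈ closure D, ∃ V, V ∈ 𝓝 x ∧ ∃ m, AtMostComponents (V ∩ S) m := by
    intro x hx
    by_cases hxD : x ∈ D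
    · by_cases hxE : x ∈ closure E
      · obtain ⟨V, hV, -, m, hm⟩ := hin x ⟨hxD, hxE⟩ Set.univ Filter.univ_mem
        exact ⟨V, hV, m, by rwa [hconv] at hm⟩
      · -- x in D off closure E : small ball inside D \ E
        have hopen : IsOpen (D ∩ (closure E)ᶜ) := hD.inter isClosed_closure.isOpen_compl
        obtain ⟨ε, hε, hball⟩ := Metric.isOpen_iff.mp hopen x ⟨hxD, hxE⟩
        refine ⟨ball x ε, ball_mem_nhds x hε, 1, ⟨{ball x ε}, by simp, ?_⟩⟩
        have hbS : ball x ε ∩ S = ball x ε := by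
          apply Set.inter_eq_left.mpr
          intro y hy
          exact ⟨(hball hy).1, fun hyE => (hball hy).2 (subset_closure hyE)⟩
        intro z hz
        rw [hbS] at hz ⊢
        rw [(convex_ball x ε).isPreconnected.connectedComponentIn hz]
        simp
    · have hfr : x ∈ frontier D := by
        rw [frontier_eq_closure_inter_closure]
        exact ⟨hx, by rwa [hD.isClosed_compl.closure_eq]⟩
      obtain ⟨m, r₀, hr₀, hr⟩ := hbd x hfr
      refine ⟨ball x (r₀ / 2), ball_mem_nhds x (by linarith), m, ?_⟩
      have := hr (r₀ / 2) (by linarith) (by linarith)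
      rwa [hconv] at this
  rcases Classical.em (Bornology.IsBounded D) with hb | hb
  · -- bounded case: closure D is compact
    have hK : IsCompact (closure D) := hb.isCompact_closure
    choose! U hU hm using key
    obtain ⟨t, htD, ht⟩ := hK.elim_nhds_subcover U (fun x hx => hU x hx)
    refine comps_finite S (t.image U) ?_ ?_
    · intro z hz
      have : z ∈ closure D := subset_closure hz.1
      obtain ⟨x, hxt, hzU⟩ : ∃ x ∈ t, z ∈ U x := by simpa using ht this
      simp only [Set.mem_iUnion, Finset.mem_image]
      exact ⟨U x, ⟨x, hxt, rfl⟩, hzU⟩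
    · intro V hV
      obtain ⟨x, hxt, rfl⟩ := Finset.mem_image.mp hV
      exact hm x (htD x hxt)
  · -- unbounded case
    obtain ⟨mI, R, hR, hI⟩ := hinf hb
    set W : Set (EuclideanSpace ℝ (Fin n)) := {x | R + 1 < ‖x‖} with hWdef
    have hW : AtMostComponents (W ∩ S) mI := by
      have := hI (R + 1) (by linarith)
      rwa [hconv] at this
    set K := closure D ∩ closedBall 0 (R + 1) with hKdef
    have hK : IsCompact K := (isCompact_closedBall _ _).inter_left isClosed_closure
    choose! U hU hm using key
    obtain ⟨t, htK, ht⟩ := hK.elim_nhds_subcover U (fun x hx => hU x hx.1)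
    refine comps_finite S (insert W (t.image U)) ?_ ?_
    · intro z hz
      simp only [Set.mem_iUnion, Finset.mem_insert, Finset.mem_image]
      rcases le_or_gt ‖z‖ (R + 1) with hle | hlt
      · have hzK : z ∈ K := ⟨subset_closure hz.1, by simpa [dist_eq_norm] using hle⟩
        obtain ⟨x, hxt, hzU⟩ : ∃ x ∈ t, z ∈ U x := by simpa using ht hzK
        exact ⟨U x, Or.inr ⟨x, hxt, rfl⟩, hzU⟩
      · exact ⟨W, Or.inl rfl, hlt⟩
    · intro V hV
      rcases Finset.mem_insert.mp hV with rfl | hV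
      · exact ⟨mI, hW⟩
      · obtain ⟨x, hxt, rfl⟩ := Finset.mem_image.mp hV
        exact hm x (htK x hxt).1
end

section
/- Let D ⊂ ℝⁿ be a domain, f : D → ℝⁿ continuous, open and discrete, E* closed in the extended space with C(f, ∂D) ⊆ E* and E = f⁻¹(E*). Let D₁ be a connected component of D \ E. Then the cluster set of f restricted to D₁ at the boundary of D₁ satisfies C(f, ∂D₁) ⊆ ∂f(D₁); in particular f is a closed map on D₁ (images of relatively closed subsets of D₁ are relatively closed in f(D₁)). -/
/-!
Call `f` boundary preserving on `A` when no sequence of `A` that leaves `A` (converges in the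
one-point compactification to a point outside `A`) has an `f`-limit in `f(A)`. When the
compactification is sequentially compact this makes `f : A → f(A)` closed, and for open `A` with
`f(A)` open it gives `C(f, ∂A) ⊆ ∂f(A)`. A component `D₁` of the open set `D \ f⁻¹(E*)` is
boundary preserving: a sequence leaving `D₁` tends either to a point of `∂D`, so that its
`f`-limits lie in `C(f, ∂D) ⊆ E*`, or to a point `z` of `D`, which lies in `f⁻¹(E*)` because `D₁` is
relatively closed in `D \ f⁻¹(E*)`, so that its `f`-limit `f(z)` lies in `E*`; and `E*` avoids
`f(D₁)`.
-/

open Set Metric Topology Filter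

/-- The cluster set `C(f, ∂D)` in the one-point compactification of `ℝⁿ`. -/
def ClusterSetInfty {n : ℕ} (f : EuclideanSpace ℝ (Fin n) → EuclideanSpace ℝ (Fin n))
    (D : Set (EuclideanSpace ℝ (Fin n))) : Set (OnePoint (EuclideanSpace ℝ (Fin n))) :=
  {w | ∃ x₀ ∈ frontier (OnePoint.some '' D),
    ∃ u : ℕ → EuclideanSpace ℝ (Fin n), (∀ k, u k ∈ D) ∧
      Tendsto (fun k => OnePoint.some (u k)) atTop (𝓝 x₀) ∧
      Tendsto (fun k => OnePoint.some (f (u k))) atTop (𝓝 w)}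

/-- The finite cluster set `C(f, ∂A)` of `f : A → ℝⁿ`. -/
def ClusterSet {n : ℕ} (f : EuclideanSpace ℝ (Fin n) → EuclideanSpace ℝ (Fin n))
    (A : Set (EuclideanSpace ℝ (Fin n))) : Set (EuclideanSpace ℝ (Fin n)) :=
  {w | ∃ z₀ ∈ frontier A, ∃ u : ℕ → EuclideanSpace ℝ (Fin n), (∀ k, u k ∈ A) ∧
      Tendsto u atTop (𝓝 z₀) ∧ Tendsto (fun k => f (u k)) atTop (𝓝 w)}

/-- `f` is a discrete map on `D`. -/
def IsDiscreteOn {X : Type*} [TopologicalSpace X] {Y : Type*} (f : X → Y) (D : Set X) : Prop :=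
  ∀ y : Y, ∀ x ∈ D, ¬ AccPt x (Filter.principal (D ∩ f ⁻¹' {y}))

/-- `f` is an open map on `D`. -/
def IsOpenOn {X Y : Type*} [TopologicalSpace X] [TopologicalSpace Y] (f : X → Y)
    (D : Set X) : Prop :=
  ∀ U ⊆ D, IsOpen U → IsOpen (f '' U)

instance (n : ℕ) : TopologicalSpace.MetrizableSpace (OnePoint (EuclideanSpace ℝ (Fin n))) :=
  (onePointEquivSphereOfFinrankEq (ι := Fin (n + 1)) (by simp)).isEmbedding.metrizableSpace

theorem closure_connectedComponentIn_inter_subset {α : Type*} [TopologicalSpace α]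
    (F : Set α) (x : α) : closure (connectedComponentIn F x) ∩ F ⊆ connectedComponentIn F x := by
  rintro y ⟨hy, hyF⟩
  by_cases hx : x ∈ F
  · have hpre : IsPreconnected (insert y (connectedComponentIn F x)) :=
      isPreconnected_connectedComponentIn.subset_closure (subset_insert _ _)
        (insert_subset hy subset_closure)
    exact hpre.subset_connectedComponentIn (mem_insert_of_mem _ (mem_connectedComponentIn hx))
      (insert_subset hyF (connectedComponentIn_subset _ _)) (mem_insert _ _)
  · simp [connectedComponentIn_eq_empty hx] at hy

theorem OnePoint.tendsto_coe_iff {X : Type*} [TopologicalSpace X] {u : ℕ → X} {x : X} :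
    Tendsto (fun k => (u k : OnePoint X)) atTop (𝓝 (x : OnePoint X)) ↔
      Tendsto u atTop (𝓝 x) :=
  OnePoint.isOpenEmbedding_coe.isInducing.tendsto_nhds_iff.symm

theorem ContinuousOn.tendsto_comp_of_mem {X Y : Type*} [TopologicalSpace X] [TopologicalSpace Y]
    {f : X → Y} {s : Set X} {u : ℕ → X} {x : X} (hf : ContinuousOn f s) (hx : x ∈ s)
    (hu : ∀ k, u k ∈ s) (hux : Tendsto u atTop (𝓝 x)) : Tendsto (f ∘ u) atTop (𝓝 (f x)) :=
  (hf x hx).tendsto.comp (tendsto_nhdsWithin_iff.mpr ⟨hux, Eventually.of_forall hu⟩)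

def BoundaryPreservingOn {X Y : Type*} [TopologicalSpace X] [TopologicalSpace Y] (f : X → Y)
    (A : Set X) : Prop :=
  ∀ (u : ℕ → X) (x₀ : OnePoint X) (w : Y), (∀ k, u k ∈ A) →
    x₀ ∉ ((↑) : X → OnePoint X) '' A → Tendsto (fun k => (u k : OnePoint X)) atTop (𝓝 x₀) →
    Tendsto (f ∘ u) atTop (𝓝 w) → w ∉ f '' A

namespace BoundaryPreservingOn

theorem image_closure_inter_subset {X Y : Type*} [TopologicalSpace X]
    [FirstCountableTopology (OnePoint X)] [TopologicalSpace Y] [T2Space Y] [FrechetUrysohnSpace Y]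
    {f : X → Y} {A S : Set X} (hfA : BoundaryPreservingOn f A) (hf : ContinuousOn f A)
    (hS : S ⊆ A) (hSA : closure S ∩ A ⊆ S) : closure (f '' S) ∩ f '' A ⊆ f '' S := by
  rintro w ⟨hw, hwA⟩
  obtain ⟨v, hvS, hvw⟩ := mem_closure_iff_seq_limit.mp hw
  choose s hsS hsv using hvS
  obtain rfl : v = f ∘ s := funext fun k => (hsv k).symm
  obtain ⟨x₀, φ, hφ, hsx₀⟩ := CompactSpace.tendsto_subseq fun k => (s k : OnePoint X)
  have hfs : Tendsto (f ∘ s ∘ φ) atTop (𝓝 w) := hvw.comp hφ.tendsto_atTop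
  by_cases hx₀ : x₀ ∈ ((↑) : X → OnePoint X) '' A
  · obtain ⟨z, hzA, rfl⟩ := hx₀
    have hsz : Tendsto (s ∘ φ) atTop (𝓝 z) := OnePoint.tendsto_coe_iff.mp hsx₀
    have hzS : z ∈ S := hSA ⟨mem_closure_of_tendsto hsz (.of_forall fun k => hsS _), hzA⟩
    have hw : w = f z :=
      tendsto_nhds_unique hfs (hf.tendsto_comp_of_mem hzA (fun k => hS (hsS _)) hsz)
    exact hw ▸ mem_image_of_mem f hzS
  · exact absurd hwA (hfA (s ∘ φ) x₀ w (fun k => hS (hsS _)) hx₀ hsx₀ hfs)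

theorem clusterSet_subset_frontier {n : ℕ}
    {f : EuclideanSpace ℝ (Fin n) → EuclideanSpace ℝ (Fin n)} {A : Set (EuclideanSpace ℝ (Fin n))}
    (hfA : BoundaryPreservingOn f A) (hA : IsOpen A) (hfA_open : IsOpen (f '' A)) :
    ClusterSet f A ⊆ frontier (f '' A) := by
  rintro w ⟨z₀, hz₀, u, hu, huz, hfu⟩
  rw [hfA_open.frontier_eq]
  refine ⟨mem_closure_of_tendsto hfu (.of_forall fun k => mem_image_of_mem f (hu k)),
    hfA u z₀ w hu ?_ ((OnePoint.continuous_coe.tendsto z₀).comp huz) hfu⟩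
  rintro ⟨z, hz, hzz⟩
  rw [hA.frontier_eq] at hz₀
  exact hz₀.2 (OnePoint.coe_injective hzz ▸ hz)

end BoundaryPreservingOn

theorem boundaryPreservingOn_of_clusterSetInfty_subset {n : ℕ}
    {D A E : Set (EuclideanSpace ℝ (Fin n))}
    {f : EuclideanSpace ℝ (Fin n) → EuclideanSpace ℝ (Fin n)}
    {Estar : Set (OnePoint (EuclideanSpace ℝ (Fin n)))} (hD : IsOpen D) (hf : ContinuousOn f D)
    (hcluster : ClusterSetInfty f D ⊆ Estar) (hE : E = {x ∈ D | OnePoint.some (f x) ∈ Estar})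
    (hA : A ⊆ D \ E) (hA_rel : closure A ∩ (D \ E) ⊆ A) : BoundaryPreservingOn f A := by
  intro u x₀ w hu hx₀ hux₀ hfu ⟨x, hxA, hxw⟩
  have hAD : A ⊆ D := hA.trans sdiff_subset
  suffices hw : OnePoint.some w ∈ Estar from (hA hxA).2 (hE ▸ ⟨hAD hxA, hxw ▸ hw⟩)
  by_cases hx₀D : x₀ ∈ OnePoint.some '' D
  · obtain ⟨z, hzD, rfl⟩ := hx₀D
    have huz : Tendsto u atTop (𝓝 z) := OnePoint.tendsto_coe_iff.mp hux₀
    have hzE : z ∈ E := by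
      by_contra hzE
      exact hx₀ ⟨z, hA_rel ⟨mem_closure_of_tendsto huz (.of_forall hu), hzD, hzE⟩, rfl⟩
    have hwz : w = f z :=
      tendsto_nhds_unique hfu (hf.tendsto_comp_of_mem hzD (fun k => hAD (hu k)) huz)
    rw [hE] at hzE
    exact hwz ▸ hzE.2
  · have hx₀_frontier : x₀ ∈ frontier (OnePoint.some '' D) := by
      rw [(OnePoint.isOpenEmbedding_coe.isOpenMap _ hD).frontier_eq]
      exact ⟨mem_closure_of_tendsto hux₀ (.of_forall fun k => mem_image_of_mem _ (hAD (hu k))),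
        hx₀D⟩
    exact hcluster ⟨x₀, hx₀_frontier, u, fun k => hAD (hu k), hux₀,
      (OnePoint.continuous_coe.tendsto w).comp hfu⟩

theorem stmt2_general {n : ℕ}
    (D : Set (EuclideanSpace ℝ (Fin n)))
    (f : EuclideanSpace ℝ (Fin n) → EuclideanSpace ℝ (Fin n))
    (hD : IsOpen D)
    (hf : ContinuousOn f D) (hfo : IsOpenOn f D)
    (Estar : Set (OnePoint (EuclideanSpace ℝ (Fin n)))) (hEstar : IsClosed Estar)
    (hcluster : ClusterSetInfty f D ⊆ Estar)
    (E : Set (EuclideanSpace ℝ (Fin n)))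
    (hE : E = {x ∈ D | OnePoint.some (f x) ∈ Estar})
    (D₁ : Set (EuclideanSpace ℝ (Fin n)))
    (hD₁ : ∃ z ∈ D \ E, D₁ = connectedComponentIn (D \ E) z) :
    ClusterSet f D₁ ⊆ frontier (f '' D₁) ∧
      ∀ S ⊆ D₁, closure S ∩ D₁ ⊆ S → closure (f '' S) ∩ (f '' D₁) ⊆ f '' S := by
  obtain ⟨z, -, rfl⟩ := hD₁
  have hDE : D \ E = D ∩ f ⁻¹' (OnePoint.some ⁻¹' Estarᶜ) := by
    ext x
    simp [hE]
  have hD₁_open : IsOpen (connectedComponentIn (D \ E) z) :=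
    (hDE ▸ hf.isOpen_inter_preimage hD
      (hEstar.isOpen_compl.preimage OnePoint.continuous_coe)).connectedComponentIn
  have hD₁_sub := connectedComponentIn_subset (D \ E) z
  have hbp : BoundaryPreservingOn f (connectedComponentIn (D \ E) z) :=
    boundaryPreservingOn_of_clusterSetInfty_subset hD hf hcluster hE hD₁_sub
      (closure_connectedComponentIn_inter_subset _ _)
  exact ⟨hbp.clusterSet_subset_frontier hD₁_open (hfo _ (hD₁_sub.trans sdiff_subset) hD₁_open),
    fun S hS hSD₁ => hbp.image_closure_inter_subset (hf.mono (hD₁_sub.trans sdiff_subset)) hS hSD₁⟩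

/-- Let `D ⊂ ℝⁿ` be a domain, `f : D → ℝⁿ` continuous, open and discrete, `E*` closed in the
extended space with `C(f, ∂D) ⊆ E*` and `E = f⁻¹(E*)`. Let `D₁` be a connected component of
`D \ E`. Then `C(f, ∂D₁) ⊆ ∂ f(D₁)`; in particular `f` is a closed map on `D₁`. -/
theorem stmt2 {n : ℕ} (hn : 2 ≤ n)
    (D : Set (EuclideanSpace ℝ (Fin n)))
    (f : EuclideanSpace ℝ (Fin n) → EuclideanSpace ℝ (Fin n))
    (hD : IsOpen D) (hDconn : IsConnected D)
    (hf : ContinuousOn f D) (hfo : IsOpenOn f D) (hfd : IsDiscreteOn f D)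
    (Estar : Set (OnePoint (EuclideanSpace ℝ (Fin n)))) (hEstar : IsClosed Estar)
    (hcluster : ClusterSetInfty f D ⊆ Estar)
    (E : Set (EuclideanSpace ℝ (Fin n)))
    (hE : E = {x ∈ D | OnePoint.some (f x) ∈ Estar})
    (D₁ : Set (EuclideanSpace ℝ (Fin n)))
    (hD₁ : ∃ z ∈ D \ E, D₁ = connectedComponentIn (D \ E) z) :
    ClusterSet f D₁ ⊆ frontier (f '' D₁) ∧
      ∀ S ⊆ D₁, closure S ∩ D₁ ⊆ S → closure (f '' S) ∩ (f '' D₁) ⊆ f '' S :=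
  stmt2_general D f hD hf hfo Estar hEstar hcluster E hE D₁ hD₁
end

section
/- Let Q : ℝⁿ → [0, ∞] be locally integrable with finite mean oscillation at x₀ ∈ ℝⁿ, i.e. limsup_{ε→0} (1/(Ωₙεⁿ)) ∫_{B(x₀,ε)} |Q(x) − Q̄_ε| dm(x) < ∞, where Q̄_ε is the integral mean of Q over B(x₀,ε). Then for some ε₀ > 0, ∫_{ε < |x−x₀| < ε₀} Q(x) / (|x−x₀| · log(1/|x−x₀|))ⁿ dm(x) = O(log log (1/ε)) as ε → 0. -/
/-!
Cut the annulus into the rings `r_{k+1} ≤ |x - x₀| < r_k`, `r_k = δe^{-k}`. Shrinking a ball by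
the factor `e` changes the mean of `Q` by at most `eⁿ` times its mean oscillation, so by the FMO
bound the mean of `Q` over `B(x₀, r_k)` is `O(k + 1)`. For `δ ≤ e⁻¹` the weight
`(|x - x₀| log(1/|x - x₀|))⁻ⁿ` is at most `(e / r_k)ⁿ (k + 1)⁻ⁿ` on the `k`-th ring, which therefore
contributes `O((k + 1)^{1-n}) = O(1/(k + 1))` as `n ≥ 2`. About `log(1/ε)` rings meet the annulus
`ε < |x - x₀| < δ`, and the harmonic sum is `O(log log(1/ε))`.
-/

open Set Metric Topology Filter MeasureTheory Module Real
open scoped Function ENNReal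

theorem Set.Ico_subset_biUnion_Ico_rev {X : Type*} [LinearOrder X] (a : ℕ → X) (N : ℕ) :
    Ico (a N) (a 0) ⊆ ⋃ i ∈ Finset.range N, Ico (a (i + 1)) (a i) := by
  induction N with
  | zero => simp
  | succ N ih => calc
    _ ⊆ Ico (a (N + 1)) (a N) ∪ Ico (a N) (a 0) := Ico_subset_Ico_union_Ico
    _ ⊆ _ := by simpa [Finset.range_add_one, union_comm] using
                  union_subset_union_left (Ico (a (N + 1)) (a N)) ih

theorem mul_exp_neg_natCast_mem_Ioc {δ : ℝ} (hδ : 0 < δ) (k : ℕ) : δ * exp (-k) ∈ Ioc 0 δ :=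
  ⟨by positivity, mul_le_of_le_one_right hδ.le (exp_le_one_iff.2 (by simp))⟩

theorem mul_exp_neg_natCast_succ (δ : ℝ) (k : ℕ) :
    δ * exp (-(k + 1 : ℕ)) = δ * exp (-k) / exp 1 := by
  rw [mul_div_assoc, ← exp_sub]
  push_cast
  ring_nf

section Average

variable {α : Type*} [MeasurableSpace α] {μ : Measure α} {f : α → ℝ} {s t : Set α}

theorem setAverage_nonneg (hf : ∀ x, 0 ≤ f x) : 0 ≤ ⨍ x in s, f x ∂μ := by
  rw [setAverage_eq, smul_eq_mul]
  exact mul_nonneg (inv_nonneg.2 measureReal_nonneg) (integral_nonneg hf)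

theorem setAverage_le_add_of_subset (hst : s ⊆ t) (hs : μ s ≠ 0) (ht : μ t ≠ ∞)
    (hf : IntegrableOn f t μ) :
    ⨍ x in s, f x ∂μ ≤
      ⨍ x in t, f x ∂μ + μ.real t / μ.real s * ⨍ x in t, |f x - (⨍ y in t, f y ∂μ)| ∂μ := by
  set c := ⨍ x in t, f x ∂μ
  have hs_fin : μ s ≠ ∞ := measure_ne_top_of_subset hst ht
  have hs_pos : 0 < μ.real s := ENNReal.toReal_pos hs hs_fin
  have ht_pos : 0 < μ.real t := hs_pos.trans_le (measureReal_mono hst ht)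
  have hdiff : IntegrableOn (fun x => f x - c) s μ :=
    (hf.mono_set hst).sub (integrableOn_const hs_fin)
  have hdev : μ.real s * (⨍ x in s, f x ∂μ - c) ≤ ∫ x in t, |f x - c| ∂μ :=
    calc μ.real s * (⨍ x in s, f x ∂μ - c) = ∫ x in s, (f x - c) ∂μ := by
          rw [integral_sub (hf.mono_set hst) (integrableOn_const hs_fin), setIntegral_const,
            setAverage_eq, smul_eq_mul, smul_eq_mul]
          field_simp
      _ ≤ ∫ x in s, |f x - c| ∂μ := integral_mono hdiff hdiff.abs fun x => le_abs_self _
      _ ≤ ∫ x in t, |f x - c| ∂μ :=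
          setIntegral_mono_set (hf.sub (integrableOn_const ht)).abs
            (Eventually.of_forall fun x => abs_nonneg _) hst.eventuallyLE
  have hratio : ∀ I : ℝ, μ.real t / μ.real s * ((μ.real t)⁻¹ * I) = I / μ.real s := fun I => by
    field_simp
  rw [setAverage_eq μ (fun x => |f x - c|), smul_eq_mul, hratio, ← sub_le_iff_le_add',
    le_div_iff₀' hs_pos]
  exact hdev

theorem setIntegral_le_sum_of_subset_biUnion {ι : Type*} {u : ι → Set α} (I : Finset ι)
    (hsu : s ⊆ ⋃ i ∈ I, u i) (hu : ∀ i ∈ I, MeasurableSet (u i))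
    (hdisj : Set.Pairwise I (Disjoint on u)) (hf : ∀ i ∈ I, IntegrableOn f (u i) μ)
    (hf₀ : ∀ i ∈ I, ∀ x ∈ u i, 0 ≤ f x) :
    ∫ x in s, f x ∂μ ≤ ∑ i ∈ I, ∫ x in u i, f x ∂μ := by
  rw [← integral_biUnion_finset I hu hdisj hf]
  refine setIntegral_mono_set (integrableOn_finset_iUnion.2 hf) ?_ hsu.eventuallyLE
  filter_upwards [ae_restrict_mem (I.measurableSet_biUnion hu)] with x hx
  obtain ⟨i, hi, hxi⟩ := mem_iUnion₂.1 hx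
  exact hf₀ i hi x hxi

end Average

theorem measureReal_ball_pos {X : Type*} [PseudoMetricSpace X] [ProperSpace X] [MeasurableSpace X]
    (μ : Measure X) [μ.IsOpenPosMeasure] [IsFiniteMeasureOnCompacts μ] (x : X) {r : ℝ}
    (hr : 0 < r) : 0 < μ.real (ball x r) :=
  ENNReal.toReal_pos (measure_ball_pos μ x hr).ne' measure_ball_lt_top.ne

section Rings

variable {E : Type*} [NormedAddCommGroup E] [MeasurableSpace E] [OpensMeasurableSpace E]
  {μ : Measure E} {x₀ : E} {Q : E → ℝ} {n : ℕ}

theorem integrableOn_and_setIntegral_ring_le {s r : ℝ} (hs : 0 < s) (hsr : s ≤ r) (hr : r < 1)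
    (hQ : ∀ x, 0 ≤ Q x) (hQint : IntegrableOn Q (ball x₀ r) μ) :
    IntegrableOn (fun x => Q x / (‖x - x₀‖ * log (1 / ‖x - x₀‖)) ^ n)
        ((‖· - x₀‖) ⁻¹' Ico s r) μ ∧
      ∫ x in (‖· - x₀‖) ⁻¹' Ico s r, Q x / (‖x - x₀‖ * log (1 / ‖x - x₀‖)) ^ n ∂μ ≤
        (∫ x in ball x₀ r, Q x ∂μ) / (s * log (1 / r)) ^ n := by
  set A := (‖· - x₀‖) ⁻¹' Ico s r
  set L := (s * log (1 / r)) ^ n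
  have hnorm : Measurable fun x => ‖x - x₀‖ :=
    (continuous_norm.comp (continuous_sub_right x₀)).measurable
  have hA : MeasurableSet A := measurableSet_Ico.preimage hnorm
  have hA_ball : A ⊆ ball x₀ r := fun x hx => mem_ball_iff_norm.2 hx.2
  have hlog_r : 0 < log (1 / r) := log_pos (one_lt_one_div (hs.trans_le hsr) hr)
  have hL : 0 < L := by positivity
  have hweight : ∀ x ∈ A, L ≤ (‖x - x₀‖ * log (1 / ‖x - x₀‖)) ^ n := by
    rintro x ⟨hsx, hxr⟩
    have : log (1 / r) ≤ log (1 / ‖x - x₀‖) :=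
      log_le_log (one_div_pos.2 (hs.trans_le hsr))
        (one_div_le_one_div_of_le (hs.trans_le hsx) hxr.le)
    show (s * log (1 / r)) ^ n ≤ _
    gcongr
  have hle : ∀ x ∈ A, Q x / (‖x - x₀‖ * log (1 / ‖x - x₀‖)) ^ n ≤ Q x / L :=
    fun x hx => div_le_div_of_nonneg_left (hQ x) hL (hweight x hx)
  have hQA : IntegrableOn Q A μ := hQint.mono_set hA_ball
  have hint : IntegrableOn (fun x => Q x / (‖x - x₀‖ * log (1 / ‖x - x₀‖)) ^ n) A μ := by
    have hw : Measurable fun x => (‖x - x₀‖ * log (1 / ‖x - x₀‖)) ^ n := by fun_prop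
    refine (hQA.div_const L).mono' (hQA.aemeasurable.div hw.aemeasurable).aestronglyMeasurable ?_
    filter_upwards [ae_restrict_mem hA] with x hx
    rw [Real.norm_eq_abs, abs_of_nonneg (div_nonneg (hQ x) (hL.trans_le (hweight x hx)).le)]
    exact hle x hx
  refine ⟨hint, ?_⟩
  calc ∫ x in A, Q x / (‖x - x₀‖ * log (1 / ‖x - x₀‖)) ^ n ∂μ
      ≤ ∫ x in A, Q x / L ∂μ := setIntegral_mono_on hint (hQA.div_const _) hA hle
    _ = (∫ x in A, Q x ∂μ) / L := integral_div _ _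
    _ ≤ (∫ x in ball x₀ r, Q x ∂μ) / L :=
        div_le_div_of_nonneg_right
          (setIntegral_mono_set hQint (Eventually.of_forall hQ) hA_ball.eventuallyLE) hL.le

theorem setIntegral_annulus_le_mul_one_add_log {δ ε C : ℝ} (hδ : 0 < δ) (hδ1 : δ ≤ 1)
    (hQ : ∀ x, 0 ≤ Q x) (hC : 0 ≤ C)
    (hring : ∀ k : ℕ,
      IntegrableOn (fun x => Q x / (‖x - x₀‖ * log (1 / ‖x - x₀‖)) ^ n)
          ((‖· - x₀‖) ⁻¹' Ico (δ * exp (-(k + 1 : ℕ))) (δ * exp (-k))) μ ∧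
        ∫ x in (‖· - x₀‖) ⁻¹' Ico (δ * exp (-(k + 1 : ℕ))) (δ * exp (-k)),
            Q x / (‖x - x₀‖ * log (1 / ‖x - x₀‖)) ^ n ∂μ ≤ C / (k + 1))
    {K : ℕ} (hK : δ * exp (-K) ≤ ε) :
    ∫ x in {x | ε < ‖x - x₀‖ ∧ ‖x - x₀‖ < δ}, Q x / (‖x - x₀‖ * log (1 / ‖x - x₀‖)) ^ n ∂μ ≤
      C * (1 + log K) := by
  set r : ℕ → ℝ := fun k => δ * exp (-k)
  have hr_anti : Antitone r := fun j k hjk => by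
    simp only [r]
    gcongr
  have hcover : {x | ε < ‖x - x₀‖ ∧ ‖x - x₀‖ < δ} ⊆
      ⋃ k ∈ Finset.range K, (‖· - x₀‖) ⁻¹' Ico (r (k + 1)) (r k) := by
    rintro x ⟨hεx, hxδ⟩
    simpa using Ico_subset_biUnion_Ico_rev r K ⟨hK.trans hεx.le, by simpa [r] using hxδ⟩
  have hnonneg : ∀ k ∈ Finset.range K, ∀ x ∈ (‖· - x₀‖) ⁻¹' Ico (r (k + 1)) (r k),
      0 ≤ Q x / (‖x - x₀‖ * log (1 / ‖x - x₀‖)) ^ n := by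
    rintro k - x ⟨hx₁, hx₂⟩
    have hx₀ : 0 < ‖x - x₀‖ := (mul_exp_neg_natCast_mem_Ioc hδ (k + 1)).1.trans_le hx₁
    have hx₁ : ‖x - x₀‖ ≤ 1 := hx₂.le.trans ((mul_exp_neg_natCast_mem_Ioc hδ k).2.trans hδ1)
    exact div_nonneg (hQ x) (pow_nonneg (mul_nonneg hx₀.le (log_nonneg (one_le_one_div hx₀ hx₁))) n)
  calc _ ≤ ∑ k ∈ Finset.range K, ∫ x in (‖· - x₀‖) ⁻¹' Ico (r (k + 1)) (r k),
        Q x / (‖x - x₀‖ * log (1 / ‖x - x₀‖)) ^ n ∂μ :=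
        setIntegral_le_sum_of_subset_biUnion _ hcover
          (fun k _ => measurableSet_Ico.preimage
            (continuous_norm.comp (continuous_sub_right x₀)).measurable)
          (fun j _ k _ hjk => (hr_anti.pairwise_disjoint_on_Ico_succ hjk).preimage _)
          (fun k _ => (hring k).1) hnonneg
    _ ≤ ∑ k ∈ Finset.range K, C / (k + 1) := Finset.sum_le_sum fun k _ => (hring k).2
    _ = C * harmonic K := by simp [harmonic, Finset.mul_sum, div_eq_mul_inv]
    _ ≤ C * (1 + log K) := mul_le_mul_of_nonneg_left (harmonic_le_one_add_log K) hC

end Rings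

section AddHaar

variable {E : Type*} [NormedAddCommGroup E] [NormedSpace ℝ E] [FiniteDimensional ℝ E]
  [MeasurableSpace E] [BorelSpace E] {μ : Measure E} [μ.IsAddHaarMeasure] {x₀ : E} {Q : E → ℝ}

theorem addHaar_real_ball_of_pos (μ : Measure E) [μ.IsAddHaarMeasure] (x : E) {r : ℝ}
    (hr : 0 < r) : μ.real (ball x r) = μ.real (ball 0 1) * r ^ finrank ℝ E := by
  rw [measureReal_def, Measure.addHaar_ball_of_pos μ x hr, ENNReal.toReal_mul,
    ENNReal.toReal_ofReal (by positivity), mul_comm, measureReal_def]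

theorem setAverage_ball_le_add {ρ ρ' : ℝ} (hρ : 0 < ρ) (hρρ' : ρ ≤ ρ')
    (hQ : IntegrableOn Q (ball x₀ ρ') μ) :
    ⨍ x in ball x₀ ρ, Q x ∂μ ≤ ⨍ x in ball x₀ ρ', Q x ∂μ +
      (ρ' / ρ) ^ finrank ℝ E * ⨍ x in ball x₀ ρ', |Q x - ⨍ y in ball x₀ ρ', Q y ∂μ| ∂μ := by
  have h := setAverage_le_add_of_subset (ball_subset_ball hρρ') (measure_ball_pos μ x₀ hρ).ne'
    measure_ball_lt_top.ne hQ
  rwa [addHaar_real_ball_of_pos μ x₀ hρ, addHaar_real_ball_of_pos μ x₀ (hρ.trans_le hρρ'),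
    mul_div_mul_left _ _ (measureReal_ball_pos μ 0 one_pos).ne', ← div_pow] at h

theorem setAverage_ball_mul_exp_neg_le {δ M : ℝ} (hδ : 0 < δ) (hQ : IntegrableOn Q (ball x₀ δ) μ)
    (hosc : ∀ ρ ∈ Ioc 0 δ, ⨍ x in ball x₀ ρ, |Q x - ⨍ y in ball x₀ ρ, Q y ∂μ| ∂μ ≤ M) (k : ℕ) :
    ⨍ x in ball x₀ (δ * exp (-k)), Q x ∂μ ≤
      ⨍ x in ball x₀ δ, Q x ∂μ + k * (exp 1 ^ finrank ℝ E * M) := by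
  induction k with
  | zero => simp
  | succ k ih =>
    have hρ := mul_exp_neg_natCast_mem_Ioc hδ k
    have hstep := setAverage_ball_le_add (μ := μ) (div_pos hρ.1 (exp_pos 1))
      (div_le_self hρ.1.le (one_le_exp zero_le_one)) (hQ.mono_set (ball_subset_ball hρ.2))
    rw [div_div_cancel₀ hρ.1.ne'] at hstep
    have := mul_le_mul_of_nonneg_left (hosc _ hρ) (by positivity : 0 ≤ exp 1 ^ finrank ℝ E)
    rw [mul_exp_neg_natCast_succ]
    push_cast
    linarith

theorem exists_setIntegral_ring_le_div (hd : 2 ≤ finrank ℝ E) {δ M : ℝ} (hδ : 0 < δ)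
    (hδe : δ ≤ exp (-1)) (hQ : ∀ x, 0 ≤ Q x) (hQint : IntegrableOn Q (ball x₀ δ) μ)
    (hosc : ∀ ρ ∈ Ioc 0 δ, ⨍ x in ball x₀ ρ, |Q x - ⨍ y in ball x₀ ρ, Q y ∂μ| ∂μ ≤ M) :
    ∃ C, 0 ≤ C ∧ ∀ k : ℕ,
      IntegrableOn (fun x => Q x / (‖x - x₀‖ * log (1 / ‖x - x₀‖)) ^ finrank ℝ E)
          ((‖· - x₀‖) ⁻¹' Ico (δ * exp (-(k + 1 : ℕ))) (δ * exp (-k))) μ ∧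
        ∫ x in (‖· - x₀‖) ⁻¹' Ico (δ * exp (-(k + 1 : ℕ))) (δ * exp (-k)),
            Q x / (‖x - x₀‖ * log (1 / ‖x - x₀‖)) ^ finrank ℝ E ∂μ ≤ C / (k + 1) := by
  set d := finrank ℝ E
  set a := ⨍ x in ball x₀ δ, Q x ∂μ
  set b := exp 1 ^ d * M
  set Ω := μ.real (ball (0 : E) 1)
  have ha : 0 ≤ a := setAverage_nonneg hQ
  have hb : 0 ≤ b := mul_nonneg (by positivity)
    ((setAverage_nonneg fun x => abs_nonneg _).trans (hosc δ ⟨hδ, le_rfl⟩))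
  refine ⟨Ω * exp 1 ^ d * (a + b), by positivity, fun k => ?_⟩
  obtain ⟨hr, hrδ⟩ := mul_exp_neg_natCast_mem_Ioc hδ k
  have hgrowth := setAverage_ball_mul_exp_neg_le hδ hQint hosc k
  rw [mul_exp_neg_natCast_succ]
  set r := δ * exp (-k)
  have hlog : (k : ℝ) + 1 ≤ log (1 / r) := by
    have := log_le_log hδ hδe
    rw [log_exp] at this
    rw [one_div, log_inv, log_mul hδ.ne' (exp_pos _).ne', log_exp]
    linarith
  obtain ⟨hint, hle⟩ := integrableOn_and_setIntegral_ring_le (n := d) (μ := μ) (x₀ := x₀)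
    (div_pos hr (exp_pos 1)) (div_le_self hr.le (one_le_exp zero_le_one))
    (hrδ.trans_lt (hδe.trans_lt (exp_lt_one_iff.2 (by norm_num)))) hQ
    (hQint.mono_set (ball_subset_ball hrδ))
  refine ⟨hint, hle.trans ?_⟩
  have hΩ : 0 < Ω := measureReal_ball_pos μ 0 one_pos
  have hvol : μ.real (ball x₀ r) = Ω * r ^ d := addHaar_real_ball_of_pos μ x₀ hr
  have hmass : ∫ x in ball x₀ r, Q x ∂μ = Ω * r ^ d * ⨍ x in ball x₀ r, Q x ∂μ := by
    rw [setAverage_eq, smul_eq_mul, hvol]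
    field_simp
  clear_value r
  calc (∫ x in ball x₀ r, Q x ∂μ) / (r / exp 1 * log (1 / r)) ^ d
      = Ω * exp 1 ^ d * (⨍ x in ball x₀ r, Q x ∂μ) / log (1 / r) ^ d := by
        rw [hmass, mul_pow, div_pow]
        field_simp
    _ ≤ Ω * exp 1 ^ d * ((a + b) * (k + 1)) / ((k : ℝ) + 1) ^ d := by
        gcongr
        nlinarith [(Nat.cast_nonneg k : (0 : ℝ) ≤ k)]
    _ ≤ Ω * exp 1 ^ d * ((a + b) * (k + 1)) / ((k : ℝ) + 1) ^ 2 := by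
        gcongr
        · linarith [(Nat.cast_nonneg k : (0 : ℝ) ≤ k)]
    _ = Ω * exp 1 ^ d * (a + b) / (k + 1) := by
        field_simp

theorem setIntegral_annulus_le_mul_log_log (hd : 2 ≤ finrank ℝ E) {M : ℝ} (hQ : ∀ x, 0 ≤ Q x)
    (hQloc : LocallyIntegrable Q μ)
    (hFMO : ∀ᶠ ε in 𝓝[>] 0, ⨍ x in ball x₀ ε, |Q x - ⨍ y in ball x₀ ε, Q y ∂μ| ∂μ ≤ M) :
    ∃ ε₀ > (0 : ℝ), ∃ C > (0 : ℝ), ∃ ε₁, 0 < ε₁ ∧ ε₁ < ε₀ ∧ ∀ ε, 0 < ε → ε < ε₁ →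
      ∫ x in {x | ε < ‖x - x₀‖ ∧ ‖x - x₀‖ < ε₀},
          Q x / (‖x - x₀‖ * log (1 / ‖x - x₀‖)) ^ finrank ℝ E ∂μ ≤ C * log (log (1 / ε)) := by
  obtain ⟨δ', hδ', hosc'⟩ := mem_nhdsGT_iff_exists_Ioo_subset.1 hFMO
  set δ := min (δ' / 2) (exp (-1))
  have hδ : 0 < δ := lt_min (half_pos hδ') (exp_pos _)
  have hδe : δ ≤ exp (-1) := min_le_right _ _
  have hosc : ∀ ρ ∈ Ioc 0 δ, ⨍ x in ball x₀ ρ, |Q x - ⨍ y in ball x₀ ρ, Q y ∂μ| ∂μ ≤ M :=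
    fun ρ hρ => hosc' ⟨hρ.1, hρ.2.trans_lt ((min_le_left _ _).trans_lt (half_lt_self hδ'))⟩
  have hQint : IntegrableOn Q (ball x₀ δ) μ :=
    (hQloc.integrableOn_isCompact (isCompact_closedBall x₀ δ)).mono_set ball_subset_closedBall
  obtain ⟨C, hC, hring⟩ := exists_setIntegral_ring_le_div hd hδ hδe hQ hQint hosc
  refine ⟨δ, hδ, 2 * C + 1, by positivity, min (δ / 2) (exp (-exp 1)),
    lt_min (by positivity) (exp_pos _), (min_le_left _ _).trans_lt (half_lt_self hδ), ?_⟩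
  intro ε hε hε₁
  set K := ⌈log (δ / ε)⌉₊
  have hεδ : ε < δ := hε₁.trans_le ((min_le_left _ _).trans (half_le_self hδ.le))
  have hlog_δε : 0 < log (δ / ε) := log_pos ((one_lt_div hε).2 hεδ)
  have hK : δ * exp (-K) ≤ ε :=
    calc δ * exp (-K) ≤ δ * exp (-log (δ / ε)) := by gcongr; exact Nat.le_ceil _
      _ = ε := by rw [exp_neg, exp_log (div_pos hδ hε)]; field_simp
  have hK_pos : (0 : ℝ) < K := Nat.cast_pos.2 (Nat.ceil_pos.2 hlog_δε)
  have hK_le : (K : ℝ) ≤ log (1 / ε) := by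
    have h₁ : (K : ℝ) < log (δ / ε) + 1 := Nat.ceil_lt_add_one hlog_δε.le
    have h₂ := log_le_log hδ hδe
    rw [log_div hδ.ne' hε.ne'] at h₁
    rw [log_exp] at h₂
    rw [one_div, log_inv]
    linarith
  have hloglog : 1 ≤ log (log (1 / ε)) := by
    have h₁ := (log_lt_iff_lt_exp hε).2 (hε₁.trans_le (min_le_right _ _))
    have h₂ : exp 1 ≤ log (1 / ε) := by rw [one_div, log_inv]; linarith
    exact (le_log_iff_exp_le ((exp_pos 1).trans_le h₂)).2 h₂
  calc _ ≤ C * (1 + log K) :=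
        setIntegral_annulus_le_mul_one_add_log hδ (hδe.trans (exp_le_one_iff.2 (by norm_num)))
          hQ hC hring hK
    _ ≤ C * (1 + log (log (1 / ε))) := by gcongr
    _ ≤ (2 * C + 1) * log (log (1 / ε)) := by nlinarith [mul_nonneg hC (sub_nonneg.2 hloglog)]

end AddHaar

/-- FMO integral estimate: if `Q ≥ 0` is locally integrable and has finite mean oscillation at
`x₀` (the normalized mean deviations over small balls are bounded near `0`), then for some
`ε₀ > 0` the integral of `Q(x)/(|x−x₀| log(1/|x−x₀|))ⁿ` over the annulus `ε < |x−x₀| < ε₀`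
is `O(log log(1/ε))` as `ε → 0`. -/
theorem stmt5 {n : ℕ} (hn : 2 ≤ n) (x₀ : EuclideanSpace ℝ (Fin n))
    (Q : EuclideanSpace ℝ (Fin n) → ℝ) (hQ : ∀ x, 0 ≤ Q x)
    (hQloc : LocallyIntegrable Q volume)
    (Ωn : ℝ) (hΩn : Ωn = (volume (ball (0 : EuclideanSpace ℝ (Fin n)) 1)).toReal)
    (hFMO : ∃ M : ℝ, ∀ᶠ ε in 𝓝[>] (0:ℝ),
      (1 / (Ωn * ε ^ n)) * ∫ x in ball x₀ ε,
          |Q x - (1 / (Ωn * ε ^ n)) * ∫ y in ball x₀ ε, Q y| ≤ M) :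
    ∃ ε₀ > (0:ℝ), ∃ C' > (0:ℝ), ∃ ε₁, 0 < ε₁ ∧ ε₁ < ε₀ ∧ ∀ ε, 0 < ε → ε < ε₁ →
      (∫ x in {x : EuclideanSpace ℝ (Fin n) | ε < ‖x - x₀‖ ∧ ‖x - x₀‖ < ε₀},
          Q x / (‖x - x₀‖ * Real.log (1 / ‖x - x₀‖)) ^ n)
        ≤ C' * Real.log (Real.log (1 / ε)) := by
  obtain ⟨M, hM⟩ := hFMO
  have hmean : ∀ ε > 0, ∀ f : EuclideanSpace ℝ (Fin n) → ℝ,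
      ⨍ x in ball x₀ ε, f x = (1 / (Ωn * ε ^ n)) * ∫ x in ball x₀ ε, f x := by
    intro ε hε f
    rw [setAverage_eq, addHaar_real_ball_of_pos volume x₀ hε, finrank_euclideanSpace_fin,
      measureReal_def, ← hΩn, smul_eq_mul, one_div]
  have hFMO' : ∀ᶠ ε in 𝓝[>] (0 : ℝ), ⨍ x in ball x₀ ε, |Q x - ⨍ y in ball x₀ ε, Q y| ≤ M := by
    filter_upwards [hM, self_mem_nhdsWithin] with ε hε hε₀
    simpa only [hmean ε hε₀] using hε
  simpa only [finrank_euclideanSpace_fin] using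
    setIntegral_annulus_le_mul_log_log (by rwa [finrank_euclideanSpace_fin]) hQ hQloc hFMO'
end

section
/- Under the hypotheses of Lemma 2 of the paper: let D ⊂ ℝⁿ be a domain, x₀ ∈ ∂D, E relatively closed and nowhere dense in D, and suppose there exist m ∈ ℕ and r₀ > 0 such that B(x₀, r) ∩ D is connected for all 0 < r < r₀ and (B(x₀, r) ∩ D) \ E has at most m components for all 0 < r < r₀. If x_k, y_k ∈ D \ E are sequences converging to x₀, then for all large k there exist paths γ_k : [0,1] → closure(B(x₀, r_k)) ∩ D with r_k = max{|x_k − x₀|, |y_k − x₀|}, γ_k(0) = x_k, γ_k(1) = y_k, γ_k(t) ∈ B(x₀, r_k) ∩ D for 0 < t < 1, and such that the image of γ_k contains at most m − 1 points of E. -/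
open Set Metric Topology Filter

section Aux


lemma concat_paths {X : Type*} [MetricSpace X] (e : X) (q : ℕ → X) (S : ℕ → Set X)
    (δ : ℕ → ℝ) (hδ : Tendsto δ atTop (𝓝 0)) (hδa : Antitone δ)
    (hS : ∀ j, S j ⊆ closedBall e (δ j))
    (hJ : ∀ j, JoinedIn (S j) (q j) (q (j + 1))) :
    ∃ a : ℝ → X, Continuous a ∧ a 0 = q 0 ∧ (∀ t : ℝ, t < 1 → a t ∈ ⋃ j, S j) ∧
      (∀ t : ℝ, 1 ≤ t → a t = e) := by
  classical
  set tj : ℕ → ℝ := fun j => 1 - (1 / 2) ^ j with htjdef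
  have htj0 : tj 0 = 0 := by simp [htjdef]
  have htjlt : ∀ j, tj j < 1 := by
    intro j
    have : (0 : ℝ) < (1 / 2) ^ j := by positivity
    simp only [htjdef]; linarith
  have htjmono : StrictMono tj := by
    intro a b hab
    simp only [htjdef, sub_lt_sub_iff_left]
    exact pow_lt_pow_right_of_lt_one₀ (by norm_num) (by norm_num) hab
  have hgap : ∀ j, 0 < tj (j + 1) - tj j := fun j => sub_pos.2 (htjmono (Nat.lt_succ_self j))
  have htjtend : Tendsto tj atTop (𝓝 1) := by
    have h2 : Tendsto (fun j : ℕ => ((1:ℝ) / 2) ^ j) atTop (𝓝 0) :=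
      tendsto_pow_atTop_nhds_zero_of_lt_one (by norm_num) (by norm_num)
    rw [htjdef]
    simpa using h2.const_sub (1:ℝ)
  let G : ℕ → ℝ → X := fun j => Nat.rec (motive := fun _ => ℝ → X) (fun _ => q 0)
    (fun j Gj t => if t ≤ tj j then Gj t
      else (hJ j).somePath.extend ((t - tj j) / (tj (j + 1) - tj j))) j
  have hG0 : ∀ t, G 0 t = q 0 := fun _ => rfl
  have hGs : ∀ j t, G (j + 1) t = if t ≤ tj j then G j t
      else (hJ j).somePath.extend ((t - tj j) / (tj (j + 1) - tj j)) := fun _ _ => rfl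
  have hSmem : ∀ (j : ℕ) (u : ℝ), (hJ j).somePath.extend u ∈ S j := by
    intro j u
    have h1 : (hJ j).somePath.extend u ∈ range (hJ j).somePath :=
      (Path.extend_range (hJ j).somePath) ▸ mem_range_self u
    rcases h1 with ⟨s, hs⟩
    rw [← hs]; exact (hJ j).somePath_mem s
  have hb : ∀ j t, tj j ≤ t → G j t = q j := by
    intro j
    induction j with
    | zero => intro t _; rfl
    | succ j _ =>
      intro t ht
      rw [hGs, if_neg (not_le.2 (lt_of_lt_of_le (htjmono (Nat.lt_succ_self j)) ht))]
      have h1 : (1 : ℝ) ≤ (t - tj j) / (tj (j + 1) - tj j) :=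
        (le_div_iff₀ (hgap j)).2 (by linarith)
      rw [Path.extend_of_one_le _ h1]
  have hGc : ∀ j, Continuous (G j) := by
    intro j
    induction j with
    | zero => exact continuous_const
    | succ j ih =>
      have heq : G (j + 1) = fun t => if t ≤ tj j then G j t
          else (hJ j).somePath.extend ((t - tj j) / (tj (j + 1) - tj j)) := funext (hGs j)
      rw [heq]
      refine Continuous.if_le ih ((hJ j).somePath.continuous_extend.comp (by fun_prop))
        continuous_id continuous_const ?_
      intro t ht
      rw [ht, hb j _ le_rfl]
      simp [Path.extend_zero]
  have hc : ∀ j i, j ≤ i → ∀ t, t ≤ tj j → G i t = G j t := by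
    intro j i hji
    induction i, hji using Nat.le_induction with
    | base => intro t _; rfl
    | succ i hji ih =>
      intro t ht
      rw [hGs, if_pos (ht.trans (htjmono.monotone hji))]
      exact ih t ht
  have hval : ∀ (t : ℝ) (j j' : ℕ), t ≤ tj j → t ≤ tj j' → G j t = G j' t := by
    intro t j j' hj hj'
    rcases le_total j j' with h | h
    · exact (hc j j' h t hj).symm
    · exact hc j' j h t hj'
  have hd : ∀ j t, G j t ∈ ⋃ i, S i := by
    intro j
    induction j with
    | zero => intro t; exact mem_iUnion.2 ⟨0, (hJ 0).source_mem⟩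
    | succ j ih =>
      intro t
      rw [hGs]
      split_ifs with h
      · exact ih t
      · exact mem_iUnion.2 ⟨j, hSmem j _⟩
  have he : ∀ N i, N ≤ i → ∀ t, tj N ≤ t → dist (G i t) e ≤ δ N := by
    intro N i hNi
    induction i, hNi using Nat.le_induction with
    | base => intro t ht; rw [hb N t ht]; exact mem_closedBall.1 (hS N (hJ N).source_mem)
    | succ i hNi ih =>
      intro t ht
      rw [hGs]
      split_ifs with h
      · exact ih t ht
      · exact le_trans (mem_closedBall.1 (hS i (hSmem i _))) (hδa hNi)
  have hex : ∀ t : ℝ, t < 1 → ∃ j, t ≤ tj j := by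
    intro t ht
    obtain ⟨j, hj⟩ := (htjtend.eventually (eventually_gt_nhds ht)).exists
    exact ⟨j, hj.le⟩
  set a : ℝ → X := fun t => if h : t < 1 then G (hex t h).choose t else e with hadef
  have ha_lt : ∀ (t : ℝ) (h : t < 1) (j : ℕ), t ≤ tj j → a t = G j t := by
    intro t h j hj
    simp only [hadef, dif_pos h]
    exact hval t _ j (hex t h).choose_spec hj
  have ha_ge : ∀ t : ℝ, ¬ t < 1 → a t = e := by
    intro t ht; simp only [hadef, dif_neg ht]
  refine ⟨a, ?_, ?_, ?_, fun t ht => ha_ge t (not_lt.2 ht)⟩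
  · rw [continuous_iff_continuousAt]
    intro t
    rcases lt_trichotomy t 1 with ht | ht | ht
    · obtain ⟨j, hj⟩ := (htjtend.eventually (eventually_gt_nhds ht)).exists
      have hev : a =ᶠ[𝓝 t] G j := by
        filter_upwards [Iio_mem_nhds hj] with s hs
        exact ha_lt s (lt_trans hs (htjlt j)) j hs.le
      exact ((hGc j).continuousAt).congr hev.symm
    · subst ht
      rw [Metric.continuousAt_iff]
      intro ε hε
      obtain ⟨N, hN⟩ := (hδ.eventually (eventually_lt_nhds hε)).exists
      refine ⟨1 - tj N, by linarith [htjlt N], ?_⟩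
      intro s hs
      have ha1 : a 1 = e := ha_ge 1 (lt_irrefl 1)
      rw [ha1]
      by_cases hs1 : s < 1
      · have habs : |s - 1| < 1 - tj N := by simpa [Real.dist_eq] using hs
        have hsN : tj N ≤ s := by
          have := abs_lt.1 habs; linarith [this.1]
        have hsj : s ≤ tj (hex s hs1).choose := (hex s hs1).choose_spec
        have hNj : N ≤ (hex s hs1).choose := by
          by_contra hcon
          push_neg at hcon
          have := htjmono hcon
          linarith
        have : dist (a s) e ≤ δ N := by
          rw [ha_lt s hs1 _ hsj]
          exact he N _ hNj s hsN
        exact lt_of_le_of_lt this hN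
      · rw [ha_ge s hs1]; simpa using hε
    · have hev : a =ᶠ[𝓝 t] (fun _ => e) := by
        filter_upwards [Ioi_mem_nhds ht] with s hs
        exact ha_ge s (not_lt.2 hs.le)
      exact continuousAt_const.congr hev.symm
  · have h0 : (0:ℝ) ≤ tj 0 := htj0.ge
    rw [ha_lt 0 one_pos 0 h0, hG0]
  · intro t ht
    rw [ha_lt t ht _ (hex t ht).choose_spec]
    exact hd _ t


lemma access_lemma {X : Type*} [NormedAddCommGroup X] [NormedSpace ℝ X]
    (W' : Set X) (hW'o : IsOpen W') (e z : X) (hz : z ∈ W')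
    (hcl : e ∈ closure (connectedComponentIn W' z))
    (hloc : ∀ U ∈ 𝓝 e, ∃ V ∈ 𝓝 e, V ⊆ U ∧
      ∃ K : Finset (Set X), ∀ w ∈ W' ∩ V, connectedComponentIn (W' ∩ V) w ∈ K) :
    ∃ a : ℝ → X, Continuous a ∧ (∀ t : ℝ, t < 1 → a t ∈ connectedComponentIn W' z) ∧
      (∀ t : ℝ, 1 ≤ t → a t = e) := by
  classical
  set Inv : Set X → Set X → Prop := fun V K =>
    V ∈ 𝓝 e ∧ (∃ w ∈ W' ∩ V, K = connectedComponentIn (W' ∩ V) w) ∧ e ∈ closure K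
    with hInvdef
  have base : Inv univ (connectedComponentIn W' z) := by
    refine ⟨univ_mem, ⟨z, ⟨hz, mem_univ z⟩, by rw [inter_univ]⟩, hcl⟩
  have step : ∀ V K, Inv V K → ∀ ε : ℝ, 0 < ε →
      ∃ V' K', Inv V' K' ∧ K' ⊆ K ∧ V' ⊆ interior V ∧ V' ⊆ ball e ε := by
    intro V K hVK ε hε
    obtain ⟨hVnhds, ⟨w₀, hw₀, hKeq⟩, hecl⟩ := hVK
    obtain ⟨V', hV'nhds, hV'sub, 𝒦, h𝒦⟩ :=
      hloc (interior V ∩ ball e ε) (inter_mem (interior_mem_nhds.2 hVnhds) (ball_mem_nhds e hε))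
    have hV'int : V' ⊆ interior V := fun v hv => (hV'sub hv).1
    have hKsubW' : K ⊆ W' ∩ V := by
      rw [hKeq]; exact connectedComponentIn_subset _ _
    have hV'ball : V' ⊆ ball e ε := fun v hv => (hV'sub hv).2
    -- e ∈ closure (K ∩ V')
    have heclKV : e ∈ closure (K ∩ V') := by
      rw [mem_closure_iff_nhds] at hecl ⊢
      intro N hN
      obtain ⟨v, hv⟩ := hecl (N ∩ V') (inter_mem hN hV'nhds)
      exact ⟨v, hv.1.1, hv.2, hv.1.2⟩
    -- finite family of components covering K ∩ V'
    set T : Set (Set X) := {A | ∃ w ∈ K ∩ V', A = connectedComponentIn (W' ∩ V') w} with hTdef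
    have hTfin : T.Finite := by
      apply (𝒦.finite_toSet).subset
      rintro A ⟨w, hw, rfl⟩
      exact h𝒦 w ⟨(hKsubW' hw.1).1, hw.2⟩
    have hcover : K ∩ V' ⊆ ⋃₀ T := by
      intro w hw
      have hwW' : w ∈ W' ∩ V' := ⟨(hKsubW' hw.1).1, hw.2⟩
      exact ⟨connectedComponentIn (W' ∩ V') w, ⟨w, hw, rfl⟩, mem_connectedComponentIn hwW'⟩
    have heclT : ∃ A ∈ T, e ∈ closure A := by
      have h1 : e ∈ closure (⋃₀ T) := closure_mono hcover heclKV
      rw [hTfin.closure_sUnion] at h1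
      simpa using h1
    obtain ⟨A, ⟨w, hwKV, rfl⟩, heA⟩ := heclT
    have hwW'V' : w ∈ W' ∩ V' := ⟨(hKsubW' hwKV.1).1, hwKV.2⟩
    refine ⟨V', connectedComponentIn (W' ∩ V') w, ⟨hV'nhds, ⟨w, hwW'V', rfl⟩, heA⟩, ?_, hV'int, hV'ball⟩
    -- K' ⊆ K
    have hKw : K = connectedComponentIn (W' ∩ V) w := by
      rw [hKeq]; exact connectedComponentIn_eq (hKeq ▸ hwKV.1)
    rw [hKw]
    apply IsPreconnected.subset_connectedComponentIn isPreconnected_connectedComponentIn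
      (mem_connectedComponentIn hwW'V')
    refine (connectedComponentIn_subset _ _).trans ?_
    exact inter_subset_inter_right _ (hV'int.trans interior_subset)
  -- recursion
  let T := {p : Set X × Set X // Inv p.1 p.2}
  have step' : ∀ (j : ℕ) (p : T), ∃ p' : T,
      p'.1.2 ⊆ p.1.2 ∧ p'.1.1 ⊆ interior p.1.1 ∧ p'.1.1 ⊆ ball e (1 / (j + 1)) := by
    rintro j ⟨⟨V, K⟩, hVK⟩
    obtain ⟨V', K', h1, h2, h3, h4⟩ := step V K hVK (1 / (j + 1)) (by positivity)
    exact ⟨⟨(V', K'), h1⟩, h2, h3, h4⟩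
  choose stepF hs1 hs2 hs3 using step'
  let f : ℕ → T := fun j => Nat.rec ⟨(univ, connectedComponentIn W' z), base⟩ (fun j p => stepF j p) j
  set Vs : ℕ → Set X := fun j => (f j).1.1 with hVsdef
  set Ks : ℕ → Set X := fun j => (f j).1.2 with hKsdef
  have hfs : ∀ j, f (j + 1) = stepF j (f j) := fun _ => rfl
  have hK0 : Ks 0 = connectedComponentIn W' z := rfl
  have hKn : ∀ j, Ks (j + 1) ⊆ Ks j := fun j => hs1 j (f j)
  have hVn : ∀ j, Vs (j + 1) ⊆ interior (Vs j) := fun j => hs2 j (f j)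
  have hVb : ∀ j, Vs (j + 1) ⊆ ball e (1 / (j + 1)) := fun j => hs3 j (f j)
  have hInv : ∀ j, Inv (Vs j) (Ks j) := fun j => (f j).2
  have hKmono : ∀ i j, i ≤ j → Ks j ⊆ Ks i := by
    intro i j hij
    induction j, hij using Nat.le_induction with
    | base => exact subset_rfl
    | succ j hij ih => exact (hKn j).trans ih
  -- choose points
  have hpts : ∀ j, ∃ p, p ∈ Ks j ∧ p ∈ W' ∩ Vs j := by
    intro j
    obtain ⟨_, ⟨w, hw, hKeq⟩, _⟩ := hInv j
    exact ⟨w, hKeq ▸ mem_connectedComponentIn hw, hw⟩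
  choose ps hps1 hps2 using hpts
  -- joining sets
  set Ss : ℕ → Set X := fun j => connectedComponentIn (W' ∩ interior (Vs (j + 1))) (ps (j + 2)) with hSsdef
  have hmemS : ∀ j, ps (j + 2) ∈ W' ∩ interior (Vs (j + 1)) := by
    intro j
    exact ⟨(hps2 (j + 2)).1, hVn (j + 1) (hps2 (j + 2)).2⟩
  have hKsubS : ∀ j, Ks (j + 2) ⊆ Ss j := by
    intro j
    apply IsPreconnected.subset_connectedComponentIn ?_ (hps1 (j + 2)) ?_
    · obtain ⟨_, ⟨w, hw, hKeq⟩, _⟩ := hInv (j + 2)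
      rw [hKeq]; exact isPreconnected_connectedComponentIn
    · intro v hv
      have hvWV : v ∈ W' ∩ Vs (j + 2) := by
        obtain ⟨_, ⟨w, hw, hKeq⟩, _⟩ := hInv (j + 2)
        have hv' : v ∈ Ks (j + 2) := hv
        rw [hKeq] at hv'
        exact connectedComponentIn_subset _ _ hv'
      exact ⟨hvWV.1, hVn (j + 1) hvWV.2⟩
  have hSsubK : ∀ j, Ss j ⊆ Ks (j + 1) := by
    intro j
    obtain ⟨_, ⟨w, hw, hKeq⟩, _⟩ := hInv (j + 1)
    have hKw : Ks (j + 1) = connectedComponentIn (W' ∩ Vs (j + 1)) (ps (j + 2)) := by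
      rw [hKeq]
      exact connectedComponentIn_eq (hKeq ▸ (hKmono (j+1) (j+2) (by omega) (hps1 (j + 2))))
    rw [hKw]
    apply IsPreconnected.subset_connectedComponentIn isPreconnected_connectedComponentIn
      (mem_connectedComponentIn (hmemS j))
    exact (connectedComponentIn_subset _ _).trans
      (inter_subset_inter_right _ interior_subset)
  have hSopen : ∀ j, IsOpen (Ss j) := fun j =>
    (hW'o.inter isOpen_interior).connectedComponentIn
  have hJ : ∀ j, JoinedIn (Ss j) (ps (j + 2)) (ps (j + 3)) := by
    intro j
    have hconn : IsConnected (Ss j) := isConnected_connectedComponentIn_iff.2 (hmemS j)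
    have hpc : IsPathConnected (Ss j) := ((hSopen j).isConnected_iff_isPathConnected).1 hconn
    apply hpc.joinedIn
    · exact mem_connectedComponentIn (hmemS j)
    · exact hKsubS j (hKmono (j + 2) (j + 3) (by omega) (hps1 (j + 3)))
  have hSball : ∀ j, Ss j ⊆ closedBall e (1 / (j + 1)) := by
    intro j
    refine ((connectedComponentIn_subset _ _).trans ?_)
    intro v hv
    exact ball_subset_closedBall (hVb j (interior_subset hv.2))
  have hδtend : Tendsto (fun j : ℕ => 1 / ((j : ℝ) + 1)) atTop (𝓝 0) :=
    tendsto_one_div_add_atTop_nhds_zero_nat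
  have hδa : Antitone (fun j : ℕ => 1 / ((j : ℝ) + 1)) := by
    intro i j hij
    apply one_div_le_one_div_of_le (by positivity)
    exact_mod_cast by omega
  obtain ⟨a, hacont, ha0, halt, hage⟩ := concat_paths e (fun j => ps (j + 2)) Ss
    (fun j => 1 / (j + 1)) hδtend hδa hSball hJ
  refine ⟨a, hacont, ?_, hage⟩
  intro t ht
  have := halt t ht
  rw [mem_iUnion] at this
  obtain ⟨j, hj⟩ := this
  rw [← hK0]
  exact hKmono 0 (j + 1) (by omega) (hSsubK j hj)


/-- A continuous map `ℝ → X` from `a` to `b` with all values in `S`. -/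
def Trip {X : Type*} [TopologicalSpace X] (S : Set X) (a b : X) : Prop :=
  ∃ f : ℝ → X, Continuous f ∧ f 0 = a ∧ f 1 = b ∧ ∀ t : ℝ, f t ∈ S

lemma Trip.mono {X : Type*} [TopologicalSpace X] {S S' : Set X} {a b : X}
    (h : Trip S a b) (hs : S ⊆ S') : Trip S' a b := by
  obtain ⟨f, h1, h2, h3, h4⟩ := h
  exact ⟨f, h1, h2, h3, fun t => hs (h4 t)⟩

lemma Trip.symm {X : Type*} [TopologicalSpace X] {S : Set X} {a b : X}
    (h : Trip S a b) : Trip S b a := by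
  obtain ⟨f, h1, h2, h3, h4⟩ := h
  exact ⟨fun t => f (1 - t), h1.comp (by fun_prop), by simpa using h3, by simpa using h2,
    fun t => h4 _⟩

lemma JoinedIn.trip {X : Type*} [TopologicalSpace X] {S : Set X} {a b : X}
    (h : JoinedIn S a b) : Trip S a b := by
  refine ⟨h.somePath.extend, h.somePath.continuous_extend, Path.extend_zero _,
    Path.extend_one _, fun t => ?_⟩
  have h1 : h.somePath.extend t ∈ range h.somePath :=
    (Path.extend_range h.somePath) ▸ mem_range_self t
  rcases h1 with ⟨s, hs⟩
  rw [← hs]; exact h.somePath_mem s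

lemma Trip.trans {X : Type*} [TopologicalSpace X] {S S' : Set X} {a b c : X}
    (h : Trip S a b) (h' : Trip S' b c) : Trip (S ∪ S') a c := by
  classical
  obtain ⟨f, hf, hf0, hf1, hfS⟩ := h
  obtain ⟨g, hg, hg0, hg1, hgS⟩ := h'
  refine ⟨fun t => if t ≤ 1 / 2 then f (2 * t) else g (2 * t - 1), ?_, ?_, ?_, ?_⟩
  · refine Continuous.if_le (hf.comp (by fun_prop)) (hg.comp (by fun_prop))
      continuous_id continuous_const ?_
    intro t ht
    rw [ht]; norm_num [hf1, hg0]
  · norm_num [hf0]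
  · norm_num [hg1]
  · intro t
    show (if t ≤ 1 / 2 then f (2 * t) else g (2 * t - 1)) ∈ S ∪ S'
    split_ifs with hsplit
    · exact Or.inl (hfS _)
    · exact Or.inr (hgS _)

section Chain

variable {X : Type*} [NormedAddCommGroup X] [NormedSpace ℝ X]


lemma chain_lemma (W W' : Set X) (hWo : IsOpen W) (hWc : IsPreconnected W)
    (hW'o : IsOpen W') (hW'W : W' ⊆ W) (hWd : W ⊆ closure W')
    (hloc : ∀ e ∈ W \ W', ∀ U ∈ 𝓝 e, ∃ V ∈ 𝓝 e, V ⊆ U ∧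
      ∃ K : Finset (Set X), ∀ w ∈ W' ∩ V, connectedComponentIn (W' ∩ V) w ∈ K)
    (m : ℕ) (𝒞 : Finset (Set X)) (h𝒞card : 𝒞.card ≤ m)
    (h𝒞 : ∀ z ∈ W', connectedComponentIn W' z ∈ 𝒞)
    (x' y' : X) (hx' : x' ∈ W') (hy' : y' ∈ W') :
    ∃ F : Finset X, F.card + 1 ≤ m ∧ ↑F ⊆ W \ W' ∧ Trip (W' ∪ ↑F) x' y' := by
  classical
  -- components are open, path-connected; helper facts
  have hcomp_open : ∀ w ∈ W', IsOpen (connectedComponentIn W' w) :=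
    fun w _ => hW'o.connectedComponentIn
  have hcomp_eq : ∀ w v : X, v ∈ connectedComponentIn W' w →
      connectedComponentIn W' v = connectedComponentIn W' w :=
    fun w v hv => (connectedComponentIn_eq hv).symm
  have hcomp_trip : ∀ w ∈ W', ∀ u v : X, u ∈ connectedComponentIn W' w →
      v ∈ connectedComponentIn W' w → Trip (connectedComponentIn W' w) u v := by
    intro w hw u v hu hv
    have hconn : IsConnected (connectedComponentIn W' w) :=
      isConnected_connectedComponentIn_iff.2 hw
    have hpc : IsPathConnected (connectedComponentIn W' w) :=
      (hW'o.connectedComponentIn.isConnected_iff_isPathConnected).1 hconn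
    exact (hpc.joinedIn u hu v hv).trip
  -- the extension step
  have ext : ∀ (𝒮 : Finset (Set X)) (F : Finset X),
      (∀ C ∈ 𝒮, ∃ w ∈ W', C = connectedComponentIn W' w) →
      connectedComponentIn W' x' ∈ 𝒮 → 𝒮 ⊆ 𝒞 → F.card + 1 ≤ 𝒮.card → (↑F ⊆ W \ W') →
      (∀ C ∈ 𝒮, ∀ b ∈ C, Trip (W' ∪ ↑F) x' b) →
      y' ∉ ⋃₀ (↑𝒮 : Set (Set X)) →
      ∃ (C' : Set X) (e : X), C' ∉ 𝒮 ∧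
        (∀ C ∈ insert C' 𝒮, ∃ w ∈ W', C = connectedComponentIn W' w) ∧
        connectedComponentIn W' x' ∈ insert C' 𝒮 ∧ insert C' 𝒮 ⊆ 𝒞 ∧
        (insert e F).card + 1 ≤ (insert C' 𝒮).card ∧ (↑(insert e F) ⊆ W \ W') ∧
        (∀ C ∈ insert C' 𝒮, ∀ b ∈ C, Trip (W' ∪ ↑(insert e F)) x' b) := by
    intro 𝒮 F hScomp hSx hS𝒞 hcard hFW htrips hy'n
    set U₁ : Set X := ⋃₀ (↑𝒮 : Set (Set X)) with hU₁def
    set U₂ : Set X := W' \ U₁ with hU₂def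
    have hU₁W' : U₁ ⊆ W' := by
      rintro v ⟨C, hC, hvC⟩
      obtain ⟨w, hw, rfl⟩ := hScomp C hC
      exact connectedComponentIn_subset _ _ hvC
    have hU₁o : IsOpen U₁ := by
      apply isOpen_sUnion
      intro C hC
      obtain ⟨w, hw, rfl⟩ := hScomp C hC
      exact hW'o.connectedComponentIn
    have hcomp_inS : ∀ v ∈ W', ∀ C ∈ 𝒮, v ∈ C → connectedComponentIn W' v = C := by
      intro v hv C hC hvC
      obtain ⟨w, hw, rfl⟩ := hScomp C hC
      exact hcomp_eq w v hvC
    have hU₂comp : ∀ w ∈ U₂, connectedComponentIn W' w ⊆ U₂ := by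
      intro w hw v hv
      have hvW' : v ∈ W' := connectedComponentIn_subset _ _ hv
      refine ⟨hvW', fun hvU₁ => ?_⟩
      obtain ⟨C, hC, hvC⟩ := hvU₁
      have h1 : connectedComponentIn W' v = C := hcomp_inS v hvW' C hC hvC
      have h2 : connectedComponentIn W' v = connectedComponentIn W' w := hcomp_eq w v hv
      have : w ∈ C := by
        rw [← h1, h2]
        exact mem_connectedComponentIn hw.1
      exact hw.2 ⟨C, hC, this⟩
    have hU₂o : IsOpen U₂ := by
      have : U₂ = ⋃ w ∈ U₂, connectedComponentIn W' w := by
        apply Subset.antisymm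
        · intro w hw
          exact mem_biUnion hw (mem_connectedComponentIn hw.1)
        · intro v hv
          obtain ⟨w, hw, hv⟩ := mem_iUnion₂.1 hv
          exact hU₂comp w hw hv
      rw [this]
      exact isOpen_biUnion fun w _ => hW'o.connectedComponentIn
    have hy'U₂ : y' ∈ U₂ := ⟨hy', hy'n⟩
    have hx'U₁ : x' ∈ U₁ := ⟨_, hSx, mem_connectedComponentIn hx'⟩
    have hdisj : ∀ v : X, v ∈ U₁ → v ∈ U₂ → False := fun v h1 h2 => h2.2 h1
    -- find a triple point
    have htriple : ∃ e, e ∈ W ∧ e ∈ closure U₁ ∧ e ∈ closure U₂ := by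
      by_contra hcon
      push_neg at hcon
      have hWsub : W ⊆ closure U₁ ∪ closure U₂ := by
        intro w hw
        have h1 : w ∈ closure W' := hWd hw
        have h2 : W' = U₁ ∪ U₂ := by
          apply Subset.antisymm
          · intro v hv
            by_cases hvU : v ∈ U₁
            · exact Or.inl hvU
            · exact Or.inr ⟨hv, hvU⟩
          · rintro v (hv | hv)
            exacts [hU₁W' hv, hv.1]
        rw [h2, closure_union] at h1
        exact h1
      have hempty : W ∩ (closure U₁ ∩ closure U₂) = ∅ := by
        rw [eq_empty_iff_forall_notMem]
        rintro v ⟨hvW, hv1, hv2⟩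
        exact hcon v hvW hv1 hv2
      rcases isPreconnected_iff_subset_of_disjoint_closed.1 hWc (closure U₁) (closure U₂)
        isClosed_closure isClosed_closure hWsub hempty with h | h
      · -- W ⊆ closure U₁ : contradiction via y'
        have hy'cl : y' ∈ closure U₁ := h (hW'W hy')
        have hy'comp : connectedComponentIn W' y' ⊆ U₂ := hU₂comp y' hy'U₂
        obtain ⟨v, hv⟩ := mem_closure_iff.1 hy'cl _ hW'o.connectedComponentIn
          (mem_connectedComponentIn hy')
        exact hdisj v hv.2 (hy'comp hv.1)
      · -- W ⊆ closure U₂ : contradiction via x'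
        have hx'cl : x' ∈ closure U₂ := h (hW'W hx')
        obtain ⟨v, hv⟩ := mem_closure_iff.1 hx'cl _ hU₁o hx'U₁
        exact hdisj v hv.1 hv.2
    obtain ⟨e, heW, heclU₁, heclU₂⟩ := htriple
    -- e ∈ closure C for some C ∈ 𝒮
    have h1 : ∃ C ∈ 𝒮, e ∈ closure C := by
      have : closure U₁ = ⋃ C ∈ (↑𝒮 : Set (Set X)), closure C := by
        rw [hU₁def, (𝒮.finite_toSet).closure_sUnion]
      rw [this] at heclU₁
      simpa using heclU₁
    obtain ⟨C, hC𝒮, heC⟩ := h1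
    -- e ∈ closure C' for some component C' ⊆ U₂
    have h2 : ∃ w ∈ U₂, e ∈ closure (connectedComponentIn W' w) := by
      set T : Set (Set X) := {A | ∃ w ∈ U₂, A = connectedComponentIn W' w} with hTdef
      have hTfin : T.Finite := by
        apply (𝒞.finite_toSet).subset
        rintro A ⟨w, hw, rfl⟩
        exact h𝒞 w hw.1
      have hcover : U₂ ⊆ ⋃₀ T :=
        fun w hw => ⟨connectedComponentIn W' w, ⟨w, hw, rfl⟩, mem_connectedComponentIn hw.1⟩
      have : e ∈ closure (⋃₀ T) := closure_mono hcover heclU₂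
      rw [hTfin.closure_sUnion] at this
      obtain ⟨B, hB⟩ := mem_iUnion.1 this
      simp only [mem_iUnion] at hB
      obtain ⟨⟨w, hw, rfl⟩, hmem⟩ := hB
      exact ⟨w, hw, hmem⟩
    obtain ⟨w, hwU₂, heC'⟩ := h2
    set C' : Set X := connectedComponentIn W' w with hC'def
    have hC'U₂ : C' ⊆ U₂ := hU₂comp w hwU₂
    have hC'nS : C' ∉ 𝒮 := by
      intro hmem
      have : w ∈ U₁ := ⟨C', hmem, mem_connectedComponentIn hwU₂.1⟩
      exact hdisj w this hwU₂
    -- e ∉ W'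
    have heE : e ∈ W \ W' := by
      refine ⟨heW, fun heW' => ?_⟩
      obtain ⟨v, hv⟩ := mem_closure_iff.1 heC _ hW'o.connectedComponentIn
        (mem_connectedComponentIn heW')
      obtain ⟨v', hv'⟩ := mem_closure_iff.1 heC' _ hW'o.connectedComponentIn
        (mem_connectedComponentIn heW')
      have hvW' : v ∈ W' := connectedComponentIn_subset _ _ hv.1
      have h3 : connectedComponentIn W' v = C := hcomp_inS v hvW' C hC𝒮 hv.2
      have h4 : connectedComponentIn W' v = connectedComponentIn W' e := hcomp_eq e v hv.1
      have h5 : connectedComponentIn W' v' = connectedComponentIn W' e := hcomp_eq e v' hv'.1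
      have h6 : connectedComponentIn W' v' = C' := by
        rw [hC'def]
        exact (connectedComponentIn_eq hv'.2).symm
      have : C ∈ 𝒮 → C' ∉ 𝒮 → False := fun _ _ => by
        have hCC' : C = C' := by rw [← h3, h4, ← h5, h6]
        exact hC'nS (hCC' ▸ hC𝒮)
      exact this hC𝒮 hC'nS
    -- access paths
    obtain ⟨zC, hzC, hCeq⟩ := hScomp C hC𝒮
    obtain ⟨a, hacont, haC, hae⟩ := access_lemma W' hW'o e zC hzC (hCeq ▸ heC)
      (hloc e heE)
    obtain ⟨b, hbcont, hbC, hbe⟩ := access_lemma W' hW'o e w hwU₂.1 heC'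
      (hloc e heE)
    have ha0C : a 0 ∈ C := hCeq ▸ haC 0 one_pos
    have hb0C' : b 0 ∈ C' := hbC 0 one_pos
    have tripa : Trip (C ∪ {e}) (a 0) e := by
      refine ⟨a, hacont, rfl, hae 1 le_rfl, fun t => ?_⟩
      by_cases ht : t < 1
      · exact Or.inl (hCeq ▸ haC t ht)
      · exact Or.inr (by rw [hae t (not_lt.1 ht)]; rfl)
    have tripb : Trip (C' ∪ {e}) e (b 0) := by
      apply Trip.symm
      refine ⟨b, hbcont, rfl, hbe 1 le_rfl, fun t => ?_⟩
      by_cases ht : t < 1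
      · exact Or.inl (hbC t ht)
      · exact Or.inr (by rw [hbe t (not_lt.1 ht)]; rfl)
    -- assemble
    refine ⟨C', e, hC'nS, ?_, ?_, ?_, ?_, ?_, ?_⟩
    · intro A hA
      rcases Finset.mem_insert.1 hA with rfl | hA
      · exact ⟨w, hwU₂.1, rfl⟩
      · exact hScomp A hA
    · exact Finset.mem_insert_of_mem hSx
    · intro A hA
      rcases Finset.mem_insert.1 hA with rfl | hA
      · exact h𝒞 w hwU₂.1
      · exact hS𝒞 hA
    · rw [Finset.card_insert_of_notMem hC'nS]
      calc (insert e F).card + 1 ≤ F.card + 1 + 1 := by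
            have := Finset.card_insert_le e F; omega
        _ ≤ 𝒮.card + 1 := by omega
    · intro v hv
      rcases Finset.mem_coe.1 hv |> Finset.mem_insert.1 with rfl | hv'
      · exact heE
      · exact hFW hv'
    · intro A hA c hc
      have hsub : (W' ∪ (↑F : Set X)) ⊆ W' ∪ ↑(insert e F) := by
        apply union_subset_union_right
        intro v hv
        exact Finset.mem_coe.2 (Finset.mem_insert_of_mem (Finset.mem_coe.1 hv))
      have hCW' : C ⊆ W' := by rw [hCeq]; exact connectedComponentIn_subset _ _
      have hC'W' : C' ⊆ W' := connectedComponentIn_subset _ _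
      have hCe : (C ∪ {e} : Set X) ⊆ W' ∪ ↑(insert e F) := by
        rintro v (hv | hv)
        · exact Or.inl (hCW' hv)
        · exact Or.inr (by simp only [mem_singleton_iff] at hv; simp [hv])
      have hC'e : (C' ∪ {e} : Set X) ⊆ W' ∪ ↑(insert e F) := by
        rintro v (hv | hv)
        · exact Or.inl (hC'W' hv)
        · exact Or.inr (by simp only [mem_singleton_iff] at hv; simp [hv])
      rcases Finset.mem_insert.1 hA with rfl | hA
      · -- A = C' : build full trip
        have trip1 : Trip (W' ∪ ↑(insert e F)) x' (a 0) :=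
          (htrips C hC𝒮 (a 0) ha0C).mono hsub
        have trip2 : Trip (W' ∪ ↑(insert e F)) (a 0) e := tripa.mono hCe
        have trip3 : Trip (W' ∪ ↑(insert e F)) e (b 0) := tripb.mono hC'e
        have trip4 : Trip (W' ∪ ↑(insert e F)) (b 0) c := by
          have hCc : C' = connectedComponentIn W' w := rfl
          exact (hcomp_trip w hwU₂.1 (b 0) c hb0C' hc).mono
            (fun v hv => Or.inl (hC'W' hv))
        have := ((trip1.trans trip2).trans trip3).trans trip4
        simpa using this.mono (by intro v hv; simpa using hv)
      · exact (htrips A hA c hc).mono hsub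
  -- main induction
  have main : ∀ (j : ℕ) (𝒮 : Finset (Set X)) (F : Finset X),
      (∀ C ∈ 𝒮, ∃ w ∈ W', C = connectedComponentIn W' w) →
      connectedComponentIn W' x' ∈ 𝒮 → 𝒮 ⊆ 𝒞 → F.card + 1 ≤ 𝒮.card → (↑F ⊆ W \ W') →
      (∀ C ∈ 𝒮, ∀ b ∈ C, Trip (W' ∪ ↑F) x' b) →
      𝒞.card ≤ 𝒮.card + j →
      ∃ F' : Finset X, F'.card + 1 ≤ m ∧ ↑F' ⊆ W \ W' ∧ Trip (W' ∪ ↑F') x' y' := by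
    intro j
    induction j with
    | zero =>
      intro 𝒮 F hScomp hSx hS𝒞 hcard hFW htrips hj
      by_cases hy'mem : y' ∈ ⋃₀ (↑𝒮 : Set (Set X))
      · obtain ⟨C, hC, hy'C⟩ := hy'mem
        exact ⟨F, le_trans hcard (le_trans (Finset.card_le_card hS𝒞) h𝒞card), hFW,
          htrips C hC y' hy'C⟩
      · exfalso
        obtain ⟨C', e, hC'nS, _, _, hsub𝒞, _, _, _⟩ :=
          ext 𝒮 F hScomp hSx hS𝒞 hcard hFW htrips hy'mem
        have h1 : (insert C' 𝒮).card = 𝒮.card + 1 := Finset.card_insert_of_notMem hC'nS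
        have h2 : (insert C' 𝒮).card ≤ 𝒞.card := Finset.card_le_card hsub𝒞
        omega
    | succ j ih =>
      intro 𝒮 F hScomp hSx hS𝒞 hcard hFW htrips hj
      by_cases hy'mem : y' ∈ ⋃₀ (↑𝒮 : Set (Set X))
      · obtain ⟨C, hC, hy'C⟩ := hy'mem
        exact ⟨F, le_trans hcard (le_trans (Finset.card_le_card hS𝒞) h𝒞card), hFW,
          htrips C hC y' hy'C⟩
      · obtain ⟨C', e, hC'nS, i1, i2, i3, i4, i5, i6⟩ :=
          ext 𝒮 F hScomp hSx hS𝒞 hcard hFW htrips hy'mem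
        apply ih (insert C' 𝒮) (insert e F) i1 i2 i3 i4 i5 i6
        rw [Finset.card_insert_of_notMem hC'nS]
        omega
  -- kick off
  have hSx0 : ∀ b ∈ connectedComponentIn W' x', Trip (W' ∪ (↑(∅ : Finset X) : Set X)) x' b := by
    intro b hb
    exact (hcomp_trip x' hx' x' b (mem_connectedComponentIn hx') hb).mono
      (fun v hv => Or.inl (connectedComponentIn_subset _ _ hv))
  exact main 𝒞.card {connectedComponentIn W' x'} ∅
    (by intro C hC; rw [Finset.mem_singleton] at hC; exact ⟨x', hx', hC⟩)
    (Finset.mem_singleton_self _)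
    (by intro C hC; rw [Finset.mem_singleton] at hC; subst hC; exact h𝒞 x' hx')
    (by simp) (by simp)
    (by intro C hC; rw [Finset.mem_singleton] at hC; subst hC; exact hSx0)
    (by simp)

end Chain

end Aux

/-- Lemma 2: let `D ⊂ ℝⁿ` be a domain, `x₀ ∈ ∂D`, `E` relatively closed and nowhere dense in
`D`, `D` finitely connected on `E`, and suppose there are `m ∈ ℕ` and `r₀ > 0` such that
`B(x₀,r) ∩ D` is connected and `(B(x₀,r) ∩ D) \ E` has at most `m` components for all
`0 < r < r₀`.  If `x_k, y_k ∈ D \ E` converge to `x₀`, then for all large `k` there are paths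
`γ_k : [0,1] → closure(B(x₀,r_k)) ∩ D`, `r_k = max{|x_k−x₀|,|y_k−x₀|}`, joining `x_k` to `y_k`,
interior-valued in `B(x₀,r_k) ∩ D`, whose image meets `E` in at most `m − 1` points. -/

theorem stmt9 {n : ℕ} (hn : 2 ≤ n)
    (D E : Set (EuclideanSpace ℝ (Fin n))) (x₀ : EuclideanSpace ℝ (Fin n))
    (hD : IsOpen D) (hDconn : IsConnected D) (hx₀ : x₀ ∈ frontier D)
    (hED : E ⊆ D) (hEclosed : closure E ∩ D ⊆ E)
    (hEnwd : interior (closure E) ∩ D = ∅)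
    (hfinconn : ∀ z₀ ∈ E, ∀ U ∈ 𝓝 z₀, ∃ V ∈ 𝓝 z₀, V ⊆ U ∧
      ∃ m' : ℕ, AtMostComponents ((D ∩ V) \ E) m')
    (m : ℕ) (hm : 1 ≤ m) (r₀ : ℝ) (hr₀ : 0 < r₀)
    (hconn : ∀ r, 0 < r → r < r₀ → IsConnected (ball x₀ r ∩ D))
    (hcomp : ∀ r, 0 < r → r < r₀ → AtMostComponents ((ball x₀ r ∩ D) \ E) m)
    (x y : ℕ → EuclideanSpace ℝ (Fin n))
    (hx : ∀ k, x k ∈ D \ E) (hy : ∀ k, y k ∈ D \ E)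
    (hxlim : Tendsto x atTop (𝓝 x₀)) (hylim : Tendsto y atTop (𝓝 x₀)) :
    ∃ N : ℕ, ∀ k ≥ N, ∃ γ : ℝ → EuclideanSpace ℝ (Fin n),
      ContinuousOn γ (Icc 0 1) ∧
      γ '' Icc 0 1 ⊆ closure (ball x₀ (max ‖x k - x₀‖ ‖y k - x₀‖)) ∩ D ∧
      γ 0 = x k ∧ γ 1 = y k ∧
      (∀ t ∈ Ioo (0:ℝ) 1, γ t ∈ ball x₀ (max ‖x k - x₀‖ ‖y k - x₀‖) ∩ D) ∧
      ∃ F : Finset (EuclideanSpace ℝ (Fin n)), F.card ≤ m - 1 ∧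
        E ∩ γ '' Icc 0 1 ⊆ ↑F := by
  classical
  have hx₀D : x₀ ∉ D := by
    rw [hD.frontier_eq] at hx₀; exact hx₀.2
  have hxev : ∀ᶠ k in atTop, ‖x k - x₀‖ < r₀ := by
    filter_upwards [hxlim (ball_mem_nhds x₀ hr₀)] with k hk
    rwa [mem_preimage, mem_ball, dist_eq_norm] at hk
  have hyev : ∀ᶠ k in atTop, ‖y k - x₀‖ < r₀ := by
    filter_upwards [hylim (ball_mem_nhds x₀ hr₀)] with k hk
    rwa [mem_preimage, mem_ball, dist_eq_norm] at hk
  obtain ⟨N, hN⟩ := eventually_atTop.1 (hxev.and hyev)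
  refine ⟨N, fun k hk => ?_⟩
  set r : ℝ := max ‖x k - x₀‖ ‖y k - x₀‖ with hrdef
  have hxD : x k ∈ D := (hx k).1
  have hyD : y k ∈ D := (hy k).1
  have hr0 : 0 < r := by
    have h1 : x k ≠ x₀ := fun h => hx₀D (h ▸ hxD)
    have h2 : 0 < ‖x k - x₀‖ := norm_pos_iff.2 (sub_ne_zero_of_ne h1)
    exact lt_of_lt_of_le h2 (le_max_left _ _)
  have hrr₀ : r < r₀ := max_lt (hN k hk).1 (hN k hk).2
  set W : Set (EuclideanSpace ℝ (Fin n)) := ball x₀ r ∩ D with hWdef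
  set W' : Set (EuclideanSpace ℝ (Fin n)) := W \ E with hW'def
  have hWo : IsOpen W := isOpen_ball.inter hD
  have hWconn : IsPreconnected W := (hconn r hr0 hrr₀).isPreconnected
  have hW'eq : W' = W ∩ (closure E)ᶜ := by
    ext z
    constructor
    · rintro ⟨hzW, hzE⟩
      exact ⟨hzW, fun hcl => hzE (hEclosed ⟨hcl, hzW.2⟩)⟩
    · rintro ⟨hzW, hzE⟩
      exact ⟨hzW, fun hE => hzE (subset_closure hE)⟩
  have hW'o : IsOpen W' := by
    rw [hW'eq]; exact hWo.inter isClosed_closure.isOpen_compl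
  have hW'W : W' ⊆ W := diff_subset
  have hWd : W ⊆ closure W' := by
    intro w hw
    rw [_root_.mem_closure_iff]
    intro O hO hwO
    by_cases hsub : O ∩ W ⊆ closure E
    · exfalso
      have h1 : w ∈ interior (closure E) :=
        mem_interior.2 ⟨O ∩ W, hsub, hO.inter hWo, ⟨hwO, hw⟩⟩
      have h2 : w ∈ interior (closure E) ∩ D := ⟨h1, hw.2⟩
      rw [hEnwd] at h2
      exact h2
    · obtain ⟨v, hvOW, hvE⟩ := not_subset.1 hsub
      exact ⟨v, hvOW.1, ⟨hvOW.2, fun hE => hvE (subset_closure hE)⟩⟩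
  have hlocW : ∀ e ∈ W \ W', ∀ U ∈ 𝓝 e, ∃ V ∈ 𝓝 e, V ⊆ U ∧
      ∃ K : Finset (Set (EuclideanSpace ℝ (Fin n))),
        ∀ w ∈ W' ∩ V, connectedComponentIn (W' ∩ V) w ∈ K := by
    intro e he U hU
    have heE : e ∈ E := by
      by_contra hneg
      exact he.2 ⟨he.1, hneg⟩
    obtain ⟨V, hVnhds, hVsub, m', 𝒦, _, hcov⟩ := hfinconn e heE (U ∩ W)
      (inter_mem hU (hWo.mem_nhds he.1))
    have hVW : V ⊆ W := fun v hv => (hVsub hv).2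
    have hset : (D ∩ V) \ E = W' ∩ V := by
      ext v
      constructor
      · rintro ⟨⟨hv1, hv2⟩, hv3⟩
        exact ⟨⟨hVW hv2, hv3⟩, hv2⟩
      · rintro ⟨⟨hv1, hv3⟩, hv2⟩
        exact ⟨⟨hv1.2, hv2⟩, hv3⟩
    rw [hset] at hcov
    exact ⟨V, hVnhds, fun v hv => (hVsub hv).1, 𝒦, hcov⟩
  -- segments from the endpoints into W'
  have hseg : ∀ p : EuclideanSpace ℝ (Fin n), p ∈ D \ E → ‖p - x₀‖ ≤ r →
      ∃ g : ℝ → EuclideanSpace ℝ (Fin n), Continuous g ∧ g 0 = p ∧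
        (∀ t : ℝ, g t ∈ D \ closure E ∧ g t ∈ closedBall x₀ r) ∧
        (∀ t : ℝ, 0 < t → g t ∈ ball x₀ r ∩ D) ∧ g 1 ∈ W' := by
    intro p hp hpr
    have hpD : p ∈ D := hp.1
    have hpcl : p ∉ closure E := fun hcl => hp.2 (hEclosed ⟨hcl, hpD⟩)
    have hopen : IsOpen (D \ closure E) := hD.sdiff isClosed_closure
    have hcont0 : Continuous (fun s : ℝ => p + s • (x₀ - p)) := by fun_prop
    have hmem0 : (0 : ℝ) ∈ (fun s : ℝ => p + s • (x₀ - p)) ⁻¹' (D \ closure E) := by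
      simp only [mem_preimage, zero_smul, add_zero]
      exact ⟨hpD, hpcl⟩
    obtain ⟨ε₀, hε₀, hball⟩ := Metric.isOpen_iff.1 (hopen.preimage hcont0) 0 hmem0
    set ε : ℝ := min (ε₀ / 2) 1 with hεdef
    have hε1 : ε ≤ 1 := min_le_right _ _
    have hεpos : 0 < ε := lt_min (by linarith) one_pos
    have hkey : ∀ s : ℝ, 0 ≤ s → s ≤ ε → p + s • (x₀ - p) ∈ D \ closure E := by
      intro s h1 h2
      have hmem : s ∈ ball (0:ℝ) ε₀ := by
        rw [mem_ball, Real.dist_eq, sub_zero, abs_of_nonneg h1]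
        have := min_le_left (ε₀ / 2) 1
        linarith
      exact hball hmem
    have hnorm : ∀ s : ℝ, 0 ≤ s → s ≤ 1 → ‖p + s • (x₀ - p) - x₀‖ = (1 - s) * ‖p - x₀‖ := by
      intro s h1 h2
      have heq : p + s • (x₀ - p) - x₀ = (1 - s) • (p - x₀) := by module
      rw [heq, norm_smul, Real.norm_eq_abs, abs_of_nonneg (by linarith)]
    set g : ℝ → EuclideanSpace ℝ (Fin n) :=
      fun t => p + (ε * max 0 (min 1 t)) • (x₀ - p) with hgdef
    have hclamp : ∀ t : ℝ, 0 ≤ ε * max 0 (min 1 t) ∧ ε * max 0 (min 1 t) ≤ ε := by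
      intro t
      constructor
      · positivity
      · nth_rewrite 2 [← mul_one ε]
        apply mul_le_mul_of_nonneg_left _ hεpos.le
        exact max_le (by norm_num) (min_le_left _ _)
    have hgball : ∀ t : ℝ, 0 < t → g t ∈ ball x₀ r ∩ D := by
      intro t ht
      have h1 : 0 < min 1 t := lt_min one_pos ht
      have h2 : (0:ℝ) < max 0 (min 1 t) := lt_of_lt_of_le h1 (le_max_right _ _)
      have hspos : 0 < ε * max 0 (min 1 t) := by positivity
      have hsle : ε * max 0 (min 1 t) ≤ ε := (hclamp t).2
      constructor
      · rw [mem_ball, dist_eq_norm, hnorm _ hspos.le (hsle.trans hε1)]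
        have hd : ‖p - x₀‖ ≤ r := hpr
        calc (1 - ε * max 0 (min 1 t)) * ‖p - x₀‖
            ≤ (1 - ε * max 0 (min 1 t)) * r := by
              apply mul_le_mul_of_nonneg_left hd
              have := hsle.trans hε1; linarith
          _ < r := by nlinarith
      · exact (hkey _ hspos.le hsle).1
    refine ⟨g, by fun_prop, ?_, ?_, hgball, ?_⟩
    · simp [hgdef]
    · intro t
      have h1 := (hclamp t).1
      have h2 := (hclamp t).2
      refine ⟨hkey _ h1 h2, ?_⟩
      rw [mem_closedBall, dist_eq_norm, hnorm _ h1 (h2.trans hε1)]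
      calc (1 - ε * max 0 (min 1 t)) * ‖p - x₀‖ ≤ 1 * ‖p - x₀‖ := by
            apply mul_le_mul_of_nonneg_right _ (norm_nonneg _)
            linarith
        _ ≤ r := by rw [one_mul]; exact hpr
    · have h1 : g 1 ∈ ball x₀ r ∩ D := hgball 1 one_pos
      have h2 : g 1 ∈ D \ closure E := hkey _ (hclamp 1).1 (hclamp 1).2
      exact ⟨h1, fun hE => h2.2 (subset_closure hE)⟩
  obtain ⟨gx, hgxc, hgx0, hgxall, hgxpos, hgx1⟩ := hseg (x k) (hx k) (le_max_left _ _)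
  obtain ⟨gy, hgyc, hgy0, hgyall, hgypos, hgy1⟩ := hseg (y k) (hy k) (le_max_right _ _)
  -- chain between gx 1 and gy 1
  obtain ⟨𝒞, h𝒞card, h𝒞cov⟩ := hcomp r hr0 hrr₀
  obtain ⟨F, hFcard, hFsub, trip⟩ := chain_lemma W W' hWo hWconn hW'o hW'W hWd hlocW
    m 𝒞 h𝒞card h𝒞cov (gx 1) (gy 1) hgx1 hgy1
  obtain ⟨mid, hmidc, hmid0, hmid1, hmidS⟩ := trip
  -- assemble the final path
  set gy' : ℝ → EuclideanSpace ℝ (Fin n) := fun t => gy (1 - t) with hgy'def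
  set inner : ℝ → EuclideanSpace ℝ (Fin n) :=
    fun t => if t ≤ 1 / 2 then mid (2 * t) else gy' (2 * t - 1) with hinnerdef
  set γ : ℝ → EuclideanSpace ℝ (Fin n) :=
    fun t => if t ≤ 1 / 2 then gx (2 * t) else inner (2 * t - 1) with hγdef
  have hgy'c : Continuous gy' := hgyc.comp (by fun_prop)
  have hinnerc : Continuous inner := by
    rw [hinnerdef]
    refine Continuous.if_le (hmidc.comp (by fun_prop)) (hgy'c.comp (by fun_prop))
      continuous_id continuous_const ?_
    intro t ht
    rw [ht]
    norm_num [hmid1, hgy'def]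
  have hγc : Continuous γ := by
    rw [hγdef]
    refine Continuous.if_le (hgxc.comp (by fun_prop)) (hinnerc.comp (by fun_prop))
      continuous_id continuous_const ?_
    intro t ht
    rw [ht]
    norm_num [hinnerdef, hmid0]
  -- F properties
  have hFW : (↑F : Set (EuclideanSpace ℝ (Fin n))) ⊆ W := fun v hv => (hFsub hv).1
  have hW'sub : W' ⊆ W := hW'W
  -- value lemmas
  have hval : ∀ t : ℝ, γ t ∈ closedBall x₀ r ∩ D ∧ (γ t ∈ E → γ t ∈ (↑F : Set _)) := by
    intro t
    rw [hγdef]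
    simp only
    split_ifs with h1
    · refine ⟨⟨(hgxall (2 * t)).2, (hgxall (2 * t)).1.1⟩, fun hE => ?_⟩
      exact absurd (subset_closure hE) (hgxall (2 * t)).1.2
    · rw [hinnerdef]
      simp only
      split_ifs with h2
      · rcases hmidS (2 * (2 * t - 1)) with hW' | hF
        · refine ⟨⟨ball_subset_closedBall hW'.1.1, hW'.1.2⟩, fun hE => absurd hE hW'.2⟩
        · exact ⟨⟨ball_subset_closedBall (hFW hF).1, (hFW hF).2⟩, fun _ => hF⟩
      · refine ⟨⟨(hgyall _).2, (hgyall _).1.1⟩, fun hE => ?_⟩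
        exact absurd (subset_closure hE) (hgyall _).1.2
  refine ⟨γ, hγc.continuousOn, ?_, ?_, ?_, ?_, F, by omega, ?_⟩
  · rw [closure_ball x₀ (ne_of_gt hr0)]
    rintro v ⟨t, _, rfl⟩
    exact (hval t).1
  · rw [hγdef]
    norm_num [hgx0]
  · rw [hγdef]
    norm_num [hinnerdef, hgy'def, hgy0]
  · rintro t ⟨ht0, ht1⟩
    rw [hγdef]
    simp only
    split_ifs with h1
    · exact hgxpos (2 * t) (by linarith)
    · rw [hinnerdef]
      simp only
      split_ifs with h2
      · rcases hmidS (2 * (2 * t - 1)) with hW' | hF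
        · exact hW'.1
        · exact (hFW hF)
      · rw [hgy'def]
        simp only
        apply hgypos
        push_neg at h1 h2
        linarith
  · rintro v ⟨hvE, t, _, rfl⟩
    exact (hval t).2 hvE
end

section
/- Let K' ⊂ ℝ² be the image of a Jordan arc and L ⊂ ℝ² the image of another Jordan arc with L ∩ K' = ∅. Then any two points x, y ∈ ℝ² \ (L ∪ K') can be joined by a path in ℝ² \ (L ∪ K'); i.e. the complement of the union of two disjoint arcs in the plane is path-connected. -/
open Set Metric Topology Filter

/-- `A` is a Jordan arc: a homeomorphic image of `[0,1]`. -/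
def IsJordanArc {X : Type*} [TopologicalSpace X] (A : Set X) : Prop :=
  ∃ φ : ℝ → X, ContinuousOn φ (Icc 0 1) ∧ InjOn φ (Icc 0 1) ∧ A = φ '' Icc 0 1

/-!
Borsuk's separation criterion: if `K ⊆ ℂ` is compact, `a, b ∉ K`, and `(z - a) / (z - b)` has a
continuous logarithm `G` on `K`, then `a` and `b` lie in the same component of `ℂ \ K`.
Otherwise one of the two components, say the one `U` of `a`, is bounded (the complement of a large
ball is connected), and `exp G · (z - b)` on `U`, `z - a` off `U` is a continuous nonvanishing
map `ℂ → ℂ`. As `ℂ` is simply connected it has a logarithm, so `z - a` would have one on a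
large circle around `a`, which it does not.

The criterion applies to two disjoint Jordan arcs: each arc is homeomorphic to `[0, 1]`, hence
simply connected, so every nonvanishing function on it lifts through the covering `exp`, and the
logarithms on the two disjoint closed arcs glue.
-/

open Complex Bornology

section ContinuousLog

variable {X : Type*} [TopologicalSpace X]

def HasContinuousLogOn (f : X → ℂ) (s : Set X) : Prop :=
  ∃ g : X → ℂ, ContinuousOn g s ∧ ∀ x ∈ s, exp (g x) = f x

theorem exists_continuous_exp_eq [SimplyConnectedSpace X] [LocallyPathConnectedSpace X]
    {f : X → ℂ} (hf : Continuous f) (h0 : ∀ x, f x ≠ 0) :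
    ∃ g : X → ℂ, Continuous g ∧ ∀ x, exp (g x) = f x := by
  obtain ⟨x₀⟩ := (inferInstance : Nonempty X)
  obtain ⟨g, ⟨-, hg⟩, -⟩ := isCoveringMapOn_exp.existsUnique_continuousMap_lifts ⟨f, hf⟩
    (exp_log (h0 x₀)) h0
  exact ⟨g, g.continuous, congr_fun hg⟩

theorem hasContinuousLogOn_of_simplyConnectedSpace {s : Set X} [SimplyConnectedSpace s]
    [LocallyPathConnectedSpace s] {f : X → ℂ} (hf : ContinuousOn f s)
    (h0 : ∀ x ∈ s, f x ≠ 0) :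
    HasContinuousLogOn f s := by
  classical
  obtain ⟨g, hg, hexp⟩ := exists_continuous_exp_eq hf.domRestrict fun x : s ↦ h0 x x.2
  refine ⟨fun x ↦ if hx : x ∈ s then g ⟨x, hx⟩ else 0, ?_, fun x hx ↦ by simp [hx, hexp]⟩
  rw [continuousOn_iff_continuous_domRestrict]
  convert hg with x
  simp

theorem HasContinuousLogOn.union {f : X → ℂ} {s t : Set X} (hs : HasContinuousLogOn f s)
    (ht : HasContinuousLogOn f t) (hsc : IsClosed s) (htc : IsClosed t)
    (hst : Disjoint s t) :
    HasContinuousLogOn f (s ∪ t) := by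
  classical
  obtain ⟨g₁, hg₁, he₁⟩ := hs
  obtain ⟨g₂, hg₂, he₂⟩ := ht
  have hs' : EqOn (s.piecewise g₁ g₂) g₁ s := piecewise_eqOn _ _ _
  have ht' : EqOn (s.piecewise g₁ g₂) g₂ t := fun x hx ↦
    piecewise_eq_of_notMem _ _ _ (hst.notMem_of_mem_right hx)
  refine ⟨s.piecewise g₁ g₂, (hg₁.congr hs').union_of_isClosed (hg₂.congr ht') hsc htc, ?_⟩
  rintro x (hx | hx)
  · rw [hs' hx, he₁ x hx]
  · rw [ht' hx, he₂ x hx]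

end ContinuousLog

theorem not_hasContinuousLogOn_sub_sphere (a : ℂ) {R : ℝ} (hR : 0 < R) :
    ¬ HasContinuousLogOn (· - a) (sphere a R) := by
  rintro ⟨g, hg, hexp⟩
  simp only at hexp
  -- `φ` is continuous with values in `2πiℤ`, hence constant, yet `φ (2π) = φ 0 - 2πi`.
  set φ : ℝ → ℂ := fun t ↦ g (circleMap a R t) - (Real.log R + t * I)
  have hφ : Continuous φ :=
    (hg.comp_continuous (continuous_circleMap a R) (circleMap_mem_sphere a hR.le)).sub
      (by fun_prop)
  have hmaps : MapsTo φ univ (AddSubgroup.zmultiples (2 * Real.pi * I)) := by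
    intro t _
    have hpolar : circleMap a R t - a = exp (Real.log R + t * I) := by
      rw [circleMap_sub_center, circleMap_zero, exp_add, ← ofReal_exp, Real.exp_log hR]
    have hφt : exp (φ t) = 1 := by
      rw [exp_sub, hexp _ (circleMap_mem_sphere a hR.le t), hpolar, div_self (exp_ne_zero _)]
    obtain ⟨n, hn⟩ := exp_eq_one_iff.1 hφt
    exact ⟨n, by simp [hn]⟩
  have hconst : φ (2 * Real.pi) = φ 0 :=
    isPreconnected_univ.constant_of_mapsTo
      (isDiscrete_iff_discreteTopology.2 (NormedSpace.discreteTopology_zmultiples _))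
      hφ.continuousOn hmaps trivial trivial
  have hper : circleMap a R (2 * Real.pi) = circleMap a R 0 := by
    simpa using periodic_circleMap a R 0
  have : 2 * Real.pi * I = 0 := by
    simp only [φ, hper] at hconst
    push_cast at hconst
    linear_combination -hconst
  simp [Real.pi_ne_zero, I_ne_zero] at this

section JordanArc

variable {X : Type*} [TopologicalSpace X] {A : Set X}

theorem IsJordanArc.image {Y : Type*} [TopologicalSpace Y] (hA : IsJordanArc A) {f : X → Y}
    (hf : ContinuousOn f A) (hinj : InjOn f A) :
    IsJordanArc (f '' A) := by
  obtain ⟨φ, hφ, hφinj, rfl⟩ := hA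
  exact ⟨f ∘ φ, hf.comp hφ (mapsTo_image _ _), hinj.comp hφinj (mapsTo_image _ _),
    (image_comp _ _ _).symm⟩

theorem IsJordanArc.isCompact (hA : IsJordanArc A) : IsCompact A := by
  obtain ⟨φ, hφ, -, rfl⟩ := hA
  exact isCompact_Icc.image_of_continuousOn hφ

theorem IsJordanArc.nonempty_homeomorph [T2Space X] (hA : IsJordanArc A) :
    Nonempty (Icc (0 : ℝ) 1 ≃ₜ A) := by
  obtain ⟨φ, hφ, hφinj, rfl⟩ := hA
  have hbij : Function.Bijective (MapsTo.restrict φ _ _ (mapsTo_image φ (Icc 0 1))) := by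
    refine ⟨(injOn_iff_injective.1 hφinj).codRestrict _, ?_⟩
    rintro ⟨_, t, ht, rfl⟩
    exact ⟨⟨t, ht⟩, rfl⟩
  exact ⟨(hφ.mapsToRestrict (mapsTo_image φ _)).homeoOfEquivCompactToT2
    (f := .ofBijective _ hbij)⟩

theorem IsJordanArc.hasContinuousLogOn [T2Space X] (hA : IsJordanArc A) {f : X → ℂ}
    (hf : ContinuousOn f A) (h0 : ∀ x ∈ A, f x ≠ 0) :
    HasContinuousLogOn f A := by
  obtain ⟨e⟩ := hA.nonempty_homeomorph
  have : ContractibleSpace (Icc (0 : ℝ) 1) :=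
    (convex_Icc 0 1).contractibleSpace (nonempty_Icc.2 zero_le_one)
  have : LocallyPathConnectedSpace (Icc (0 : ℝ) 1) :=
    (convex_Icc 0 1).locallyPathConnectedSpace
  have : SimplyConnectedSpace A := e.symm.toHomotopyEquiv.simplyConnectedSpace
  have : LocallyPathConnectedSpace A := e.symm.isOpenEmbedding.locallyPathConnectedSpace
  exact hasContinuousLogOn_of_simplyConnectedSpace hf h0

end JordanArc

theorem isPreconnected_compl_closedBall {E : Type*} [NormedAddCommGroup E] [NormedSpace ℝ E]
    (h : 1 < Module.rank ℝ E) (x : E) {r : ℝ} (hr : 0 ≤ r) :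
    IsPreconnected (closedBall x r)ᶜ := by
  have hpolar :
      (closedBall x r)ᶜ = (fun p : E × ℝ ↦ x + p.2 • p.1) '' (sphere 0 1 ×ˢ Ioi r) := by
    ext z
    simp only [mem_compl_iff, mem_closedBall, not_le, mem_image, mem_prod,
      mem_sphere_zero_iff_norm, mem_Ioi, Prod.exists]
    constructor
    · intro hz
      have hd : dist z x ≠ 0 := (hr.trans_lt hz).ne'
      refine ⟨(dist z x)⁻¹ • (z - x), dist z x, ⟨?_, hz⟩, ?_⟩
      · rw [norm_smul, ← dist_eq_norm, norm_inv, Real.norm_eq_abs, abs_dist,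
          inv_mul_cancel₀ hd]
      · rw [smul_smul, mul_inv_cancel₀ hd, one_smul, add_sub_cancel]
    · rintro ⟨u, t, ⟨hu, ht⟩, rfl⟩
      rwa [dist_eq_norm, add_sub_cancel_left, norm_smul, hu, mul_one, Real.norm_eq_abs,
        abs_of_pos (hr.trans_lt ht)]
  rw [hpolar]
  exact ((isPreconnected_sphere h 0 1).prod isPreconnected_Ioi).image _
    (by fun_prop : Continuous _).continuousOn

theorem IsOpen.frontier_connectedComponentIn_subset {α : Type*} [TopologicalSpace α]
    [LocallyConnectedSpace α] {F : Set α} (hF : IsOpen F) (x : α) :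
    frontier (connectedComponentIn F x) ⊆ Fᶜ := by
  intro y hy hyF
  obtain ⟨z, hzy, hzx⟩ := mem_closure_iff.1 (frontier_subset_closure hy) _
    hF.connectedComponentIn (mem_connectedComponentIn hyF)
  have hyx : y ∈ connectedComponentIn F x := by
    rw [connectedComponentIn_eq hzx, ← connectedComponentIn_eq hzy]
    exact mem_connectedComponentIn hyF
  exact hy.2 (hF.connectedComponentIn.interior_eq.symm ▸ hyx)

theorem connectedComponentIn_compl_eq_of_not_isBounded {E : Type*} [NormedAddCommGroup E]
    [NormedSpace ℝ E] (h : 1 < Module.rank ℝ E) {K : Set E} (hK : IsBounded K) {a b : E}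
    (ha : ¬IsBounded (connectedComponentIn Kᶜ a))
    (hb : ¬IsBounded (connectedComponentIn Kᶜ b)) :
    connectedComponentIn Kᶜ a = connectedComponentIn Kᶜ b := by
  obtain ⟨R, hR, hKR⟩ := hK.subset_closedBall_lt 0 0
  have hfar : ∀ x, ¬IsBounded (connectedComponentIn Kᶜ x) →
      ∃ u ∈ connectedComponentIn Kᶜ x, u ∈ (closedBall 0 R)ᶜ := fun x hx ↦
    not_subset.1 fun hsub ↦ hx (isBounded_closedBall.subset hsub)
  obtain ⟨u, hua, huR⟩ := hfar a ha
  obtain ⟨v, hvb, hvR⟩ := hfar b hb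
  have hva : v ∈ connectedComponentIn Kᶜ a := by
    rw [connectedComponentIn_eq hua]
    exact (isPreconnected_compl_closedBall h 0 hR.le).subset_connectedComponentIn huR
      (compl_subset_compl.2 hKR) hvR
  rw [connectedComponentIn_eq hva, connectedComponentIn_eq hvb]

theorem mem_connectedComponentIn_compl_of_isBounded {K : Set ℂ} (hK : IsClosed K) {a b : ℂ}
    (ha : a ∉ K) (hU : IsBounded (connectedComponentIn Kᶜ a)) {G : ℂ → ℂ} (hG : Continuous G)
    (hGK : ∀ z ∈ K, exp (G z) * (z - b) = z - a) : b ∈ connectedComponentIn Kᶜ a := by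
  classical
  by_contra hbU
  set U := connectedComponentIn Kᶜ a
  set N : ℂ → ℂ := U.piecewise (fun z ↦ exp (G z) * (z - b)) (· - a)
  have hN : Continuous N := (by fun_prop : Continuous fun z ↦ exp (G z) * (z - b)).piecewise
    (fun z hz ↦ hGK z <|
      compl_compl K ▸ hK.isOpen_compl.frontier_connectedComponentIn_subset a hz)
    (by fun_prop)
  have hN0 : ∀ z, N z ≠ 0 := by
    intro z
    by_cases hz : z ∈ U
    · simp only [N, piecewise_eq_of_mem _ _ _ hz]
      exact mul_ne_zero (exp_ne_zero _) (sub_ne_zero.2 (ne_of_mem_of_not_mem hz hbU))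
    · simp only [N, piecewise_eq_of_notMem _ _ _ hz]
      have haU : a ∈ U := mem_connectedComponentIn (F := Kᶜ) ha
      exact sub_ne_zero.2 (ne_of_mem_of_not_mem haU hz).symm
  obtain ⟨H, hH, hexp⟩ := exists_continuous_exp_eq hN hN0
  obtain ⟨R, hR, hUR⟩ := hU.subset_ball_lt 0 a
  refine not_hasContinuousLogOn_sub_sphere a hR ⟨H, hH.continuousOn, fun z hz ↦ ?_⟩
  rw [hexp]
  exact piecewise_eq_of_notMem _ _ _ fun hzU ↦ (mem_ball.1 (hUR hzU)).ne (mem_sphere.1 hz)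

theorem IsCompact.mem_connectedComponentIn_compl_of_hasContinuousLogOn {K : Set ℂ}
    (hK : IsCompact K) {a b : ℂ} (ha : a ∉ K) (hb : b ∉ K)
    (hlog : HasContinuousLogOn (fun z ↦ (z - a) / (z - b)) K) :
    b ∈ connectedComponentIn Kᶜ a := by
  obtain ⟨g, hg, hexp⟩ := hlog
  obtain ⟨G, hG⟩ := ContinuousMap.exists_restrict_eq hK.isClosed ⟨_, hg.domRestrict⟩
  have hGK : ∀ z ∈ K, exp (G z) = (z - a) / (z - b) := fun z hz ↦
    (congr_arg exp (DFunLike.congr_fun hG ⟨z, hz⟩)).trans (hexp z hz)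
  have hne : ∀ {c}, c ∉ K → ∀ z ∈ K, z - c ≠ 0 := fun hc z hz ↦
    sub_ne_zero.2 (ne_of_mem_of_not_mem hz hc)
  by_cases hUa : IsBounded (connectedComponentIn Kᶜ a)
  · refine mem_connectedComponentIn_compl_of_isBounded hK.isClosed ha hUa G.continuous fun z hz ↦ ?_
    rw [hGK z hz, div_mul_cancel₀ _ (hne hb z hz)]
  by_cases hUb : IsBounded (connectedComponentIn Kᶜ b)
  · have hab := mem_connectedComponentIn_compl_of_isBounded (b := a) hK.isClosed hb hUb
      (continuous_neg.comp G.continuous) fun z hz ↦ ?_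
    · rw [← connectedComponentIn_eq hab]
      exact mem_connectedComponentIn hb
    · rw [Function.comp_apply, exp_neg, hGK z hz, inv_div, div_mul_cancel₀ _ (hne ha z hz)]
  rw [connectedComponentIn_compl_eq_of_not_isBounded (by simp) hK.isBounded hUa hUb]
  exact mem_connectedComponentIn hb

theorem isPathConnected_compl_union_of_isJordanArc {K₁ K₂ : Set ℂ} (h₁ : IsJordanArc K₁)
    (h₂ : IsJordanArc K₂) (hdisj : Disjoint K₁ K₂) : IsPathConnected (K₁ ∪ K₂)ᶜ := by
  have hK : IsCompact (K₁ ∪ K₂) := h₁.isCompact.union h₂.isCompact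
  obtain ⟨a, ha⟩ : (K₁ ∪ K₂)ᶜ.Nonempty := nonempty_compl.2 hK.ne_univ
  have hall : (K₁ ∪ K₂)ᶜ ⊆ connectedComponentIn (K₁ ∪ K₂)ᶜ a := by
    intro b hb
    have hne : ∀ z ∈ K₁ ∪ K₂, z - b ≠ 0 := fun z hz ↦
      sub_ne_zero.2 (ne_of_mem_of_not_mem hz hb)
    have hf : ContinuousOn (fun z ↦ (z - a) / (z - b)) (K₁ ∪ K₂) :=
      (continuousOn_id.sub continuousOn_const).div (continuousOn_id.sub continuousOn_const) hne
    have h0 : ∀ z ∈ K₁ ∪ K₂, (z - a) / (z - b) ≠ 0 := fun z hz ↦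
      div_ne_zero (sub_ne_zero.2 (ne_of_mem_of_not_mem hz ha)) (hne z hz)
    refine hK.mem_connectedComponentIn_compl_of_hasContinuousLogOn ha hb ?_
    exact (h₁.hasContinuousLogOn (hf.mono subset_union_left) fun z hz ↦ h0 z (.inl hz)).union
      (h₂.hasContinuousLogOn (hf.mono subset_union_right) fun z hz ↦ h0 z (.inr hz))
      h₁.isCompact.isClosed h₂.isCompact.isClosed hdisj
  have hconn := isConnected_connectedComponentIn_iff.2 ha
  rw [(connectedComponentIn_subset _ _).antisymm hall] at hconn
  exact hK.isClosed.isOpen_compl.isConnected_iff_isPathConnected.1 hconn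

/-- The complement of the union of two disjoint Jordan arcs in the plane is path-connected:
any two points of `ℝ² \ (L ∪ K')` can be joined by a path avoiding `L ∪ K'`. -/
theorem stmt18 (L K' : Set (EuclideanSpace ℝ (Fin 2)))
    (hL : IsJordanArc L) (hK' : IsJordanArc K') (hdisj : Disjoint L K') :
    IsPathConnected ((univ : Set (EuclideanSpace ℝ (Fin 2))) \ (L ∪ K')) := by
  let e : EuclideanSpace ℝ (Fin 2) ≃ₜ ℂ := orthonormalBasisOneI.repr.symm.toHomeomorph
  have hC := isPathConnected_compl_union_of_isJordanArc
    (hL.image e.continuous.continuousOn e.injective.injOn)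
    (hK'.image e.continuous.continuousOn e.injective.injOn)
    ((disjoint_image_iff e.injective).2 hdisj)
  rwa [← image_union, ← image_compl_eq e.bijective, e.isPathConnected_image,
    compl_eq_univ_sdiff] at hC
end
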